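/- arXiv:2202.02525 — 8 statements merged into one kernel-verified Lean document; each statement's English description precedes it below -/
import Mathlib

section
/- If the generalized Chern–Simons equation Δu = λ e^u (e^u − 1)^5 + 4π Σ_{s=1}^N δ_{p_s} with λ > 0 has a solution u : V → ℝ, then necessarily λ ≥ (6^6/5^5)·(4πN/Vol(V)). -/
open Real

/-- The graph Laplacian: `Δu(x) = (1/μ(x)) Σ_y w(x,y)(u(y) − u(x))`. -/
noncomputable def lapl {V : Type*} [Fintype V] (μ : V → ℝ) (w : V → V → ℝ) (u : V → ℝ) (x : V) : ℝ :=
  (1 / μ x) * ∑ y, w x y * (u y - u x)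

/-- The integral on the graph: `∫_V f dμ = Σ_x μ(x) f(x)`. -/
noncomputable def integ {V : Type*} [Fintype V] (μ : V → ℝ) (f : V → ℝ) : ℝ := ∑ x, μ x * f x

/-- The volume of the graph: `Vol(V) = Σ_x μ(x)`. -/
noncomputable def vol {V : Type*} [Fintype V] (μ : V → ℝ) : ℝ := ∑ x, μ x

/-- The Dirac mass at `p`. -/
noncomputable def dirac {V : Type*} [DecidableEq V] (μ : V → ℝ) (p x : V) : ℝ :=
  if x = p then 1 / μ p else 0

/-- The squared length of the gradient: `|∇u|²(x) = (1/(2μ(x))) Σ_y w(x,y)(u(y) − u(x))²`. -/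
noncomputable def gradSq {V : Type*} [Fintype V] (μ : V → ℝ) (w : V → V → ℝ) (u : V → ℝ) (x : V) : ℝ :=
  (1 / (2 * μ x)) * ∑ y, w x y * (u y - u x) ^ 2

/-- The gradient form `Γ(u,φ)(x) = (1/(2μ(x))) Σ_y w(x,y)(u(y) − u(x))(φ(y) − φ(x))`. -/
noncomputable def gamma {V : Type*} [Fintype V] (μ : V → ℝ) (w : V → V → ℝ) (u φ : V → ℝ) (x : V) : ℝ :=
  (1 / (2 * μ x)) * ∑ y, w x y * (u y - u x) * (φ y - φ x)

/-- `u` solves the generalized Chern–Simons equation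
    `Δu = λ e^u (e^u − 1)^5 + 4π Σ_s δ_{p_s}` with parameter `lam`. -/
noncomputable def isSol {V : Type*} [Fintype V] [DecidableEq V] (μ : V → ℝ) (w : V → V → ℝ)
    {N : ℕ} (p : Fin N → V) (lam : ℝ) (u : V → ℝ) : Prop :=
  ∀ x, lapl μ w u x =
    lam * Real.exp (u x) * (Real.exp (u x) - 1) ^ 5 + 4 * π * ∑ s, dirac μ (p s) x

/-- The energy functional
    `I_λ(v) = ∫_V [ (1/2)|∇v|² + (λ/6)(e^{u₀+v} − 1)^6 + (4πN/Vol(V)) v ] dμ`. -/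
noncomputable def energy {V : Type*} [Fintype V] (μ : V → ℝ) (w : V → V → ℝ)
    (u0 : V → ℝ) (N : ℕ) (lam : ℝ) (v : V → ℝ) : ℝ :=
  integ μ (fun x => (1 / 2) * gradSq μ w v x
    + (lam / 6) * (Real.exp (u0 x + v x) - 1) ^ 6 + (4 * π * N / vol μ) * v x)

/-- The Sobolev `W^{1,2}` norm `(∫_V (|∇v|² + v²) dμ)^{1/2}`. -/
noncomputable def sobNorm {V : Type*} [Fintype V] (μ : V → ℝ) (w : V → V → ℝ)
    (v : V → ℝ) : ℝ :=
  Real.sqrt (integ μ (fun x => gradSq μ w v x + v x ^ 2))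

/-- The derivative of the energy functional at `v` in direction `φ`:
    `∫_V Γ(v,φ) dμ + λ ∫_V e^{u₀+v}(e^{u₀+v} − 1)^5 φ dμ + (4πN/Vol(V)) ∫_V φ dμ`. -/
noncomputable def dEnergy {V : Type*} [Fintype V] (μ : V → ℝ) (w : V → V → ℝ)
    (u0 : V → ℝ) (N : ℕ) (lam : ℝ) (v φ : V → ℝ) : ℝ :=
  integ μ (gamma μ w v φ)
    + lam * integ μ (fun x => Real.exp (u0 x + v x) * (Real.exp (u0 x + v x) - 1) ^ 5 * φ x)
    + (4 * π * N / vol μ) * integ μ φ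

lemma key_pointwise (s : ℝ) (hs : 0 < s) : -(5 ^ 5 / 6 ^ 6 : ℝ) ≤ s * (s - 1) ^ 5 := by
  nlinarith [sq_nonneg (6 * s - 1), sq_nonneg (s - 1), sq_nonneg ((6 * s - 1) * (s - 1)),
    sq_nonneg ((6 * s - 1) * (s - 1) ^ 2), mul_pos hs hs, sq_nonneg (6 * s - 1 + (s-1)),
    sq_nonneg s]

/-- if the generalized Chern–Simons equation with parameter `λ > 0` has a
solution, then `λ ≥ (6^6/5^5)·(4πN/Vol(V))`. -/
theorem chern_simons_necessary_condition {V : Type*} [Fintype V] [DecidableEq V] [Nonempty V]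
    (w : V → V → ℝ) (μ : V → ℝ)
    (hsymm : ∀ x y, w x y = w y x) (hnn : ∀ x y, 0 ≤ w x y)
    (hconn : ∀ x y : V, Relation.ReflTransGen (fun a b => 0 < w a b) x y)
    (hmu : ∀ x, 0 < μ x)
    (N : ℕ) (hN : 1 ≤ N) (p : Fin N → V) (hp : Function.Injective p)
    (lam : ℝ) (hlam : 0 < lam) (u : V → ℝ) (hu : isSol μ w p lam u) :
    lam ≥ (6 ^ 6 / 5 ^ 5) * (4 * π * N / vol μ) := by
  have hvol : 0 < vol μ := Finset.sum_pos (fun x _ => hmu x) Finset.univ_nonempty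
  set A : ℝ := integ μ (fun x => Real.exp (u x) * (Real.exp (u x) - 1) ^ 5) with hA
  -- integral of Laplacian is zero
  have hlap : integ μ (lapl μ w u) = 0 := by
    have h1 : integ μ (lapl μ w u) = ∑ x, ∑ y, w x y * (u y - u x) := by
      unfold integ lapl
      refine Finset.sum_congr rfl fun x _ => ?_
      rw [← mul_assoc, mul_one_div, div_self (hmu x).ne', one_mul]
    rw [h1]
    have h2 : ∑ x, ∑ y, w x y * (u y - u x) = ∑ y, ∑ x, w x y * (u y - u x) :=
      Finset.sum_comm
    have h3 : ∑ y, ∑ x, w x y * (u y - u x) = -∑ x, ∑ y, w x y * (u y - u x) := by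
      rw [← Finset.sum_neg_distrib]
      refine Finset.sum_congr rfl fun y _ => ?_
      rw [← Finset.sum_neg_distrib]
      refine Finset.sum_congr rfl fun x _ => ?_
      rw [hsymm x y]
      ring
    linarith [h2.trans h3]
  -- integral of dirac sum
  have hdir : integ μ (fun x => 4 * π * ∑ s, dirac μ (p s) x) = 4 * π * N := by
    unfold integ dirac
    have step : ∑ x, μ x * (4 * π * ∑ s, if x = p s then 1 / μ (p s) else 0)
        = 4 * π * ∑ s : Fin N, ∑ x, μ x * (if x = p s then 1 / μ (p s) else 0) := by
      simp only [Finset.mul_sum]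
      rw [Finset.sum_comm]
      exact Finset.sum_congr rfl fun s _ => Finset.sum_congr rfl fun x _ => by ring
    rw [step]
    have : ∀ s : Fin N, ∑ x, μ x * (if x = p s then 1 / μ (p s) else 0) = 1 := by
      intro s
      rw [Finset.sum_eq_single (p s)]
      · rw [if_pos rfl, mul_one_div, div_self (hmu (p s)).ne']
      · intro b _ hb; rw [if_neg hb, mul_zero]
      · intro h; exact absurd (Finset.mem_univ _) h
    simp only [this, Finset.sum_const, Finset.card_univ, Fintype.card_fin, nsmul_eq_mul, mul_one]
  -- integrate the equation
  have heq : 0 = lam * A + 4 * π * N := by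
    have : integ μ (lapl μ w u) =
        integ μ (fun x => lam * (Real.exp (u x) * (Real.exp (u x) - 1) ^ 5))
        + integ μ (fun x => 4 * π * ∑ s, dirac μ (p s) x) := by
      unfold integ
      rw [← Finset.sum_add_distrib]
      refine Finset.sum_congr rfl fun x _ => ?_
      rw [hu x]; ring
    rw [hlap, hdir] at this
    have hlamA : integ μ (fun x => lam * (Real.exp (u x) * (Real.exp (u x) - 1) ^ 5))
        = lam * A := by
      simp only [hA, integ, Finset.mul_sum]
      refine Finset.sum_congr rfl fun x _ => ?_
      ring
    rw [hlamA] at this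
    linarith
  -- pointwise lower bound for A
  have hAlb : -(5 ^ 5 / 6 ^ 6 : ℝ) * vol μ ≤ A := by
    rw [hA]
    unfold integ vol
    rw [Finset.mul_sum]
    refine Finset.sum_le_sum fun x _ => ?_
    rw [mul_comm (-(5 ^ 5 / 6 ^ 6 : ℝ)) (μ x)]
    exact mul_le_mul_of_nonneg_left (key_pointwise _ (Real.exp_pos _)) (hmu x).le
  have hNpos : (0:ℝ) < N := by exact_mod_cast Nat.lt_of_lt_of_le Nat.zero_lt_one hN
  have hpi := Real.pi_pos
  have h1 : 4 * π * N ≤ lam * ((5 ^ 5 / 6 ^ 6 : ℝ) * vol μ) := by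
    nlinarith [mul_le_mul_of_nonneg_left hAlb hlam.le]
  have h2 : (6 ^ 6 / 5 ^ 5 : ℝ) * (4 * π * N / vol μ) = (6 ^ 6 / 5 ^ 5) * (4 * π * N) / vol μ := by
    ring
  rw [ge_iff_le, h2, div_le_iff₀ hvol]
  nlinarith
end

section
/- For every p ≥ 1 there exists a constant C > 0, depending only on the graph G and on p, such that for every function u : V → ℝ with ∫_V u dμ = 0 one has ‖u‖_p ≤ C ‖∇u‖_2, where ‖u‖_p = (∫_V |u|^p dμ)^{1/p} and ‖∇u‖_2 = (∫_V |∇u|² dμ)^{1/2}. -/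
open Real

set_option maxHeartbeats 1600000 in
/-- Sobolev-type inequality: for every `p ≥ 1` there is `C > 0` depending
only on the graph and on `p` such that `‖u‖_p ≤ C ‖∇u‖₂` whenever `∫_V u dμ = 0`. -/
theorem sobolev_inequality {V : Type*} [Fintype V] [Nonempty V]
    (w : V → V → ℝ) (μ : V → ℝ)
    (hsymm : ∀ x y, w x y = w y x) (hnn : ∀ x y, 0 ≤ w x y)
    (hconn : ∀ x y : V, Relation.ReflTransGen (fun a b => 0 < w a b) x y)
    (hmu : ∀ x, 0 < μ x)
    (p : ℝ) (hp : 1 ≤ p) :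
    ∃ C : ℝ, 0 < C ∧ ∀ u : V → ℝ, integ μ u = 0 →
      (integ μ (fun x => |u x| ^ p)) ^ (1 / p) ≤ C * Real.sqrt (integ μ (gradSq μ w u)) := by
  classical
  have h2E : ∀ (u : V → ℝ), 2 * integ μ (gradSq μ w u)
      = ∑ x, ∑ y, w x y * (u y - u x) ^ 2 := by
    intro u
    show 2 * ∑ x, μ x * gradSq μ w u x = _
    unfold gradSq
    rw [Finset.mul_sum]
    refine Finset.sum_congr rfl fun x _ => ?_
    have hx : (μ x : ℝ) ≠ 0 := (hmu x).ne'
    field_simp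
  have hEnn : ∀ u : V → ℝ, 0 ≤ integ μ (gradSq μ w u) := by
    intro u
    show (0:ℝ) ≤ ∑ x, μ x * gradSq μ w u x
    refine Finset.sum_nonneg fun x _ => mul_nonneg (hmu x).le ?_
    show (0:ℝ) ≤ (1 / (2 * μ x)) * ∑ y, w x y * (u y - u x) ^ 2
    have h1 : (0:ℝ) ≤ ∑ y, w x y * (u y - u x) ^ 2 :=
      Finset.sum_nonneg fun y _ => mul_nonneg (hnn x y) (sq_nonneg _)
    have h2 := (hmu x).le
    positivity
  have hstep : ∀ b c : V, 0 < w b c → ∀ u : V → ℝ,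
      |u c - u b| ≤ Real.sqrt (2 / w b c) * Real.sqrt (integ μ (gradSq μ w u)) := by
    intro b c hw u
    have hterm : w b c * (u c - u b) ^ 2 ≤ 2 * integ μ (gradSq μ w u) := by
      rw [h2E u]
      calc w b c * (u c - u b) ^ 2 ≤ ∑ y, w b y * (u y - u b) ^ 2 :=
            Finset.single_le_sum (f := fun y => w b y * (u y - u b) ^ 2)
              (fun y _ => mul_nonneg (hnn b y) (sq_nonneg _))
              (Finset.mem_univ c)
        _ ≤ ∑ x, ∑ y, w x y * (u y - u x) ^ 2 :=
            Finset.single_le_sum (f := fun x => ∑ y, w x y * (u y - u x) ^ 2)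
              (fun x _ => Finset.sum_nonneg fun y _ => mul_nonneg (hnn x y) (sq_nonneg _))
              (Finset.mem_univ b)
    have hsq : (u c - u b) ^ 2 ≤ 2 / w b c * integ μ (gradSq μ w u) := by
      rw [div_mul_eq_mul_div, le_div_iff₀ hw]
      nlinarith [hterm]
    calc |u c - u b| = Real.sqrt ((u c - u b) ^ 2) := (Real.sqrt_sq_eq_abs _).symm
      _ ≤ Real.sqrt (2 / w b c * integ μ (gradSq μ w u)) := Real.sqrt_le_sqrt hsq
      _ = Real.sqrt (2 / w b c) * Real.sqrt (integ μ (gradSq μ w u)) :=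
          Real.sqrt_mul (by positivity) _
  have hpair : ∀ x y : V, ∃ K : ℝ, 0 ≤ K ∧ ∀ u : V → ℝ,
      |u y - u x| ≤ K * Real.sqrt (integ μ (gradSq μ w u)) := by
    intro x y
    have h := hconn x y
    induction h with
    | refl => exact ⟨0, le_refl 0, fun u => by simp⟩
    | @tail b c hb hbc ih =>
      obtain ⟨K, hK0, hK⟩ := ih
      have hs : (0:ℝ) ≤ Real.sqrt (2 / w b c) := Real.sqrt_nonneg _
      refine ⟨K + Real.sqrt (2 / w b c), by linarith, fun u => ?_⟩
      have h1 := hstep b c hbc u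
      have h2 := hK u
      have h3 := abs_sub_le (u c) (u b) (u x)
      nlinarith [Real.sqrt_nonneg (integ μ (gradSq μ w u))]
  choose K hKnn hK using hpair
  set K0 : ℝ := ∑ x : V, ∑ y : V, K x y with hK0def
  have hK0nn : 0 ≤ K0 :=
    Finset.sum_nonneg fun x _ => Finset.sum_nonneg fun y _ => hKnn x y
  have hKle : ∀ x y : V, K x y ≤ K0 := by
    intro x y
    calc K x y ≤ ∑ y', K x y' :=
          Finset.single_le_sum (fun y' _ => hKnn x y') (Finset.mem_univ y)
      _ ≤ K0 :=
          Finset.single_le_sum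
            (fun x' _ => Finset.sum_nonneg fun y' _ => hKnn x' y') (Finset.mem_univ x)
  have hvol : 0 < vol μ := Finset.sum_pos (fun x _ => hmu x) Finset.univ_nonempty
  have hp0 : p ≠ 0 := by linarith
  refine ⟨(vol μ) ^ (1 / p) * (K0 + 1),
    mul_pos (Real.rpow_pos_of_pos hvol _) (by linarith), fun u hu => ?_⟩
  set S := Real.sqrt (integ μ (gradSq μ w u)) with hS
  have hSnn : 0 ≤ S := Real.sqrt_nonneg _
  have hpt : ∀ x, |u x| ≤ K0 * S := by
    intro x
    have hsum : vol μ * u x = ∑ y, μ y * (u x - u y) := by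
      have h0 : ∑ y, μ y * u y = 0 := hu
      simp only [mul_sub, Finset.sum_sub_distrib, h0, sub_zero]
      show (∑ y, μ y) * u x = ∑ y, μ y * u x
      rw [Finset.sum_mul]
    have habs : vol μ * |u x| ≤ vol μ * (K0 * S) := by
      calc vol μ * |u x| = |vol μ * u x| := by rw [abs_mul, abs_of_pos hvol]
        _ = |∑ y, μ y * (u x - u y)| := by rw [hsum]
        _ ≤ ∑ y, |μ y * (u x - u y)| := Finset.abs_sum_le_sum_abs _ _
        _ ≤ ∑ y, μ y * (K0 * S) := by
            refine Finset.sum_le_sum fun y _ => ?_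
            rw [abs_mul, abs_of_pos (hmu y)]
            refine mul_le_mul_of_nonneg_left ?_ (hmu y).le
            calc |u x - u y| ≤ K y x * S := hK y x u
              _ ≤ K0 * S := mul_le_mul_of_nonneg_right (hKle y x) hSnn
        _ = vol μ * (K0 * S) := by rw [← Finset.sum_mul]; rfl
    exact le_of_mul_le_mul_left habs hvol
  set M : ℝ := K0 * S with hM
  have hMnn : 0 ≤ M := mul_nonneg hK0nn hSnn
  have hintle : integ μ (fun x => |u x| ^ p) ≤ vol μ * M ^ p := by
    show (∑ x, μ x * |u x| ^ p) ≤ _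
    rw [show vol μ * M ^ p = ∑ x, μ x * M ^ p by rw [← Finset.sum_mul]; rfl]
    refine Finset.sum_le_sum fun x _ => ?_
    exact mul_le_mul_of_nonneg_left
      (Real.rpow_le_rpow (abs_nonneg _) (hpt x) (by linarith)) (hmu x).le
  have hLnn : 0 ≤ integ μ (fun x => |u x| ^ p) := by
    show (0:ℝ) ≤ ∑ x, μ x * |u x| ^ p
    exact Finset.sum_nonneg fun x _ =>
      mul_nonneg (hmu x).le (Real.rpow_nonneg (abs_nonneg _) _)
  calc (integ μ (fun x => |u x| ^ p)) ^ (1 / p)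
      ≤ (vol μ * M ^ p) ^ (1 / p) :=
        Real.rpow_le_rpow hLnn hintle (by positivity)
    _ = (vol μ) ^ (1 / p) * (M ^ p) ^ (1 / p) :=
        Real.mul_rpow hvol.le (Real.rpow_nonneg hMnn _)
    _ = (vol μ) ^ (1 / p) * M := by
        rw [← Real.rpow_mul hMnn, mul_one_div, div_self hp0, Real.rpow_one]
    _ ≤ (vol μ) ^ (1 / p) * ((K0 + 1) * S) := by
        refine mul_le_mul_of_nonneg_left ?_ (Real.rpow_nonneg hvol.le _)
        exact mul_le_mul_of_nonneg_right (by linarith) hSnn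
    _ = (vol μ) ^ (1 / p) * (K0 + 1) * S := by ring
end

section
/- Let λ > 0, K ≥ λ, and let (W_n)_{n≥0} be the sequence defined by W_0 = −u_0 and (Δ − K)W_n = λ e^{u_0 + W_{n−1}}(e^{u_0 + W_{n−1}} − 1)^5 − K W_{n−1} + 4πN/Vol(V) for n ≥ 1. Then the sequence is pointwise nonincreasing, W_0 ≥ W_1 ≥ W_2 ≥ ⋯, and for every subsolution W_− of the reduced equation one has W_−(x) ≤ W_n(x) for all n ≥ 0 and all x ∈ V. -/
open Real

section AuxIter

lemma iter_hd' (x : ℝ) : HasDerivAt (fun x : ℝ => x - x*(x-1)^5)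
    (1 - (1*(x-1)^5 + x*(5*(x-1)^(5-1)*1))) x := by
  have h1 : HasDerivAt (fun x : ℝ => x - 1) 1 x := (hasDerivAt_id x).sub_const 1
  exact (hasDerivAt_id x).sub ((hasDerivAt_id x).mul (h1.pow 5))

lemma iter_poly (a b : ℝ) (ha : 0 ≤ a) (hab : a ≤ b) (hb : b ≤ 1) :
    b*(b-1)^5 - a*(a-1)^5 ≤ b - a := by
  have key : MonotoneOn (fun x : ℝ => x - x*(x-1)^5) (Set.Icc 0 1) := by
    apply monotoneOn_of_deriv_nonneg (convex_Icc 0 1)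
    · exact Continuous.continuousOn (by continuity)
    · intro x _
      exact (iter_hd' x).differentiableAt.differentiableWithinAt
    · intro x hx
      rw [interior_Icc] at hx
      rw [(iter_hd' x).deriv]
      norm_num
      nlinarith [sq_nonneg (x-1), sq_nonneg ((x-1)^2),
        mul_nonneg hx.1.le (sub_nonneg.2 hx.2.le), sq_nonneg (3*x-1), sq_nonneg x,
        mul_nonneg (mul_nonneg hx.1.le hx.1.le) (sub_nonneg.2 hx.2.le),
        sq_nonneg ((x-1)*(3*x-1))]
  have := key ⟨ha, hab.trans hb⟩ ⟨ha.trans hab, hb⟩ hab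
  simp only at this
  linarith

/-- Key Lipschitz-type bound for `f(t) = λ e^t (e^t-1)^5` on `(-∞,0]`. -/
lemma iter_keylem (lam K s t : ℝ) (hlam : 0 < lam) (hK : lam ≤ K) (hst : s ≤ t) (ht : t ≤ 0) :
    lam * Real.exp t * (Real.exp t - 1) ^ 5 - lam * Real.exp s * (Real.exp s - 1) ^ 5
      ≤ K * (t - s) := by
  set a := Real.exp s with hadef
  set b := Real.exp t with hbdef
  have ha0 : 0 < a := Real.exp_pos s
  have hab : a ≤ b := Real.exp_le_exp.2 hst
  have hb1 : b ≤ 1 := Real.exp_le_one_iff.2 ht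
  have hba : b - a ≤ t - s := by
    have h1 : (s - t) + 1 ≤ Real.exp (s - t) := Real.add_one_le_exp (s - t)
    have h2 : a = b * Real.exp (s - t) := by
      rw [hadef, hbdef, ← Real.exp_add]; ring_nf
    have hb0 : 0 < b := Real.exp_pos t
    nlinarith [Real.exp_pos (s - t)]
  have hp := iter_poly a b ha0.le hab hb1
  have h3 : lam * (b*(b-1)^5 - a*(a-1)^5) ≤ K * (b - a) := by
    rcases le_or_gt 0 (b*(b-1)^5 - a*(a-1)^5) with h | h
    · calc lam * (b*(b-1)^5 - a*(a-1)^5) ≤ K * (b*(b-1)^5 - a*(a-1)^5) :=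
            mul_le_mul_of_nonneg_right hK h
        _ ≤ K * (b - a) := mul_le_mul_of_nonneg_left hp (hlam.trans_le hK).le
    · have hA : lam * (b*(b-1)^5 - a*(a-1)^5) ≤ 0 := mul_nonpos_of_nonneg_of_nonpos hlam.le h.le
      have hB : (0:ℝ) ≤ K * (b - a) :=
        mul_nonneg (hlam.trans_le hK).le (sub_nonneg.2 hab)
      linarith
  have h4 : K * (b - a) ≤ K * (t - s) :=
    mul_le_mul_of_nonneg_left hba (hlam.trans_le hK).le
  nlinarith

lemma iter_lapl_max {V : Type*} [Fintype V]
    (w : V → V → ℝ) (μ : V → ℝ) (hnn : ∀ x y, 0 ≤ w x y) (hmu : ∀ x, 0 < μ x)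
    (h : V → ℝ) (x0 : V) (hx0 : ∀ y, h y ≤ h x0) : lapl μ w h x0 ≤ 0 := by
  unfold lapl
  apply mul_nonpos_of_nonneg_of_nonpos
  · exact one_div_nonneg.2 (hmu x0).le
  · apply Finset.sum_nonpos
    intro y _
    exact mul_nonpos_of_nonneg_of_nonpos (hnn _ _) (by linarith [hx0 y])

lemma iter_max_principle {V : Type*} [Fintype V] [Nonempty V]
    (w : V → V → ℝ) (μ : V → ℝ) (hnn : ∀ x y, 0 ≤ w x y) (hmu : ∀ x, 0 < μ x)
    (K : ℝ) (hK : 0 < K) (h : V → ℝ) (hh : ∀ x, K * h x ≤ lapl μ w h x) :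
    ∀ x, h x ≤ 0 := by
  obtain ⟨x0, hx0⟩ := Finite.exists_max h
  have hl : lapl μ w h x0 ≤ 0 := iter_lapl_max w μ hnn hmu h x0 hx0
  have h0 : h x0 ≤ 0 := by nlinarith [hh x0]
  exact fun x => (hx0 x).trans h0

lemma iter_lapl_sub {V : Type*} [Fintype V] (μ : V → ℝ) (w : V → V → ℝ) (f g : V → ℝ) (x : V) :
    lapl μ w (fun y => f y - g y) x = lapl μ w f x - lapl μ w g x := by
  unfold lapl
  rw [← mul_sub, ← Finset.sum_sub_distrib]
  congr 1
  apply Finset.sum_congr rfl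
  intros; ring

lemma iter_lapl_add {V : Type*} [Fintype V] (μ : V → ℝ) (w : V → V → ℝ) (f g : V → ℝ) (x : V) :
    lapl μ w (fun y => f y + g y) x = lapl μ w f x + lapl μ w g x := by
  unfold lapl
  rw [← mul_add, ← Finset.sum_add_distrib]
  congr 1
  apply Finset.sum_congr rfl
  intros; ring

lemma iter_lapl_neg {V : Type*} [Fintype V] (μ : V → ℝ) (w : V → V → ℝ) (f : V → ℝ) (x : V) :
    lapl μ w (fun y => -f y) x = -lapl μ w f x := by
  unfold lapl
  rw [← mul_neg, ← Finset.sum_neg_distrib]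
  congr 1
  apply Finset.sum_congr rfl
  intros; ring

end AuxIter

/-- the iterative sequence `(W_n)` with `W₀ = −u₀` is pointwise nonincreasing
and bounded below by every subsolution of the reduced equation. -/
theorem iteration_monotone {V : Type*} [Fintype V] [DecidableEq V] [Nonempty V]
    (w : V → V → ℝ) (μ : V → ℝ)
    (hsymm : ∀ x y, w x y = w y x) (hnn : ∀ x y, 0 ≤ w x y)
    (hconn : ∀ x y : V, Relation.ReflTransGen (fun a b => 0 < w a b) x y)
    (hmu : ∀ x, 0 < μ x)
    (N : ℕ) (hN : 1 ≤ N) (p : Fin N → V) (hp : Function.Injective p)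
    (u0 : V → ℝ)
    (hu0 : ∀ x, lapl μ w u0 x = -(4 * π * N / vol μ) + 4 * π * ∑ s, dirac μ (p s) x)
    (lam K : ℝ) (hlam : 0 < lam) (hK : lam ≤ K)
    (W : ℕ → V → ℝ) (hW0 : ∀ x, W 0 x = -u0 x)
    (hWrec : ∀ n x, lapl μ w (W (n + 1)) x - K * W (n + 1) x =
      lam * Real.exp (u0 x + W n x) * (Real.exp (u0 x + W n x) - 1) ^ 5
        - K * W n x + 4 * π * N / vol μ) :
    (∀ n x, W (n + 1) x ≤ W n x) ∧
    (∀ Wm : V → ℝ,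
      (∀ x, lapl μ w Wm x ≥
        lam * Real.exp (u0 x + Wm x) * (Real.exp (u0 x + Wm x) - 1) ^ 5 + 4 * π * N / vol μ) →
      ∀ n x, Wm x ≤ W n x) := by
  have hKpos : 0 < K := hlam.trans_le hK
  have hdir : ∀ x, 0 ≤ 4 * π * ∑ s, dirac μ (p s) x := by
    intro x
    apply mul_nonneg (by positivity)
    apply Finset.sum_nonneg
    intro s _
    unfold dirac
    split
    · exact one_div_nonneg.2 (hmu _).le
    · exact le_refl 0
  have hW0f : W 0 = fun y => -u0 y := funext hW0
  have aux : ∀ n, (∀ x, W (n + 1) x ≤ W n x) ∧ (∀ x, W n x ≤ W 0 x) := by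
    intro n
    induction n with
    | zero =>
      have h01 : ∀ x, W 1 x - W 0 x ≤ 0 := by
        apply iter_max_principle w μ hnn hmu K hKpos (fun y => W 1 y - W 0 y)
        intro x
        show K * (W 1 x - W 0 x) ≤ lapl μ w (fun y => W 1 y - W 0 y) x
        have e1 := hWrec 0 x
        rw [hW0 x] at e1
        norm_num at e1
        have e2 := hu0 x
        have e4 : lapl μ w (W 0) x = -lapl μ w u0 x := by
          rw [hW0f]; exact iter_lapl_neg μ w u0 x
        have e5 := hdir x
        have e6 := hW0 x
        rw [iter_lapl_sub μ w (W 1) (W 0) x, e4, e6]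
        linarith
      refine ⟨fun x => ?_, fun x => le_refl _⟩
      show W 1 x ≤ W 0 x
      linarith [h01 x]
    | succ n ih =>
      obtain ⟨ih1, ih2⟩ := ih
      have chain : ∀ x, W (n + 1) x ≤ W 0 x := fun x => (ih1 x).trans (ih2 x)
      refine ⟨?_, chain⟩
      have hle : ∀ x, W (n + 1 + 1) x - W (n + 1) x ≤ 0 := by
        apply iter_max_principle w μ hnn hmu K hKpos (fun y => W (n + 1 + 1) y - W (n + 1) y)
        intro x
        show K * (W (n + 1 + 1) x - W (n + 1) x) ≤
          lapl μ w (fun y => W (n + 1 + 1) y - W (n + 1) y) x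
        have e1 := hWrec (n + 1) x
        have e2 := hWrec n x
        have key := iter_keylem lam K (u0 x + W (n + 1) x) (u0 x + W n x) hlam hK
          (by linarith [ih1 x]) (by linarith [ih2 x, hW0 x])
        rw [iter_lapl_sub μ w (W (n + 1 + 1)) (W (n + 1)) x]
        linarith
      exact fun x => by linarith [hle x]
  refine ⟨fun n => (aux n).1, ?_⟩
  intro Wm hsub
  have hbase : ∀ x, Wm x ≤ W 0 x := by
    obtain ⟨x0, hx0⟩ := Finite.exists_max (fun x => u0 x + Wm x)
    have hl : lapl μ w (fun x => u0 x + Wm x) x0 ≤ 0 :=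
      iter_lapl_max w μ hnn hmu _ x0 hx0
    rw [iter_lapl_add μ w u0 Wm x0] at hl
    have e2 := hu0 x0
    have e3 := hsub x0
    have e5 := hdir x0
    have h5 : lam * Real.exp (u0 x0 + Wm x0) * (Real.exp (u0 x0 + Wm x0) - 1) ^ 5 ≤ 0 := by
      linarith
    have epos := Real.exp_pos (u0 x0 + Wm x0)
    have h6 : Real.exp (u0 x0 + Wm x0) - 1 ≤ 0 := by
      by_contra hc
      push_neg at hc
      nlinarith [mul_pos (mul_pos hlam epos) (pow_pos (by linarith : (0:ℝ) < Real.exp (u0 x0 + Wm x0) - 1) 5)]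
    have h7 : u0 x0 + Wm x0 ≤ 0 := Real.exp_le_one_iff.1 (by linarith)
    intro x
    rw [hW0 x]
    linarith [hx0 x]
  intro n
  induction n with
  | zero => exact hbase
  | succ n ih =>
    have hle : ∀ x, Wm x - W (n + 1) x ≤ 0 := by
      apply iter_max_principle w μ hnn hmu K hKpos (fun y => Wm y - W (n + 1) y)
      intro x
      show K * (Wm x - W (n + 1) x) ≤ lapl μ w (fun y => Wm y - W (n + 1) y) x
      have e2 := hWrec n x
      have e4 := hsub x
      have key := iter_keylem lam K (u0 x + Wm x) (u0 x + W n x) hlam hK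
        (by linarith [ih x]) (by linarith [(aux n).2 x, hW0 x])
      rw [iter_lapl_sub μ w Wm (W (n + 1)) x]
      linarith
    exact fun x => by linarith [hle x]
end

section
/- Every subsolution v of the reduced equation Δv = λ e^{u_0+v}(e^{u_0+v} − 1)^5 + 4πN/Vol(V) satisfies v(x) ≤ −u_0(x) for all x ∈ V, i.e. u_0 + v ≤ 0 on V. -/
open Real

/-- every subsolution `v` of the reduced equation satisfies `v ≤ −u₀`,
i.e. `u₀ + v ≤ 0` on `V`. -/
theorem subsolution_upper_bound {V : Type*} [Fintype V] [DecidableEq V] [Nonempty V]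
    (w : V → V → ℝ) (μ : V → ℝ)
    (hsymm : ∀ x y, w x y = w y x) (hnn : ∀ x y, 0 ≤ w x y)
    (hconn : ∀ x y : V, Relation.ReflTransGen (fun a b => 0 < w a b) x y)
    (hmu : ∀ x, 0 < μ x)
    (N : ℕ) (hN : 1 ≤ N) (p : Fin N → V) (hp : Function.Injective p)
    (u0 : V → ℝ)
    (hu0 : ∀ x, lapl μ w u0 x = -(4 * π * N / vol μ) + 4 * π * ∑ s, dirac μ (p s) x)
    (lam : ℝ) (hlam : 0 < lam)
    (v : V → ℝ)
    (hv : ∀ x, lapl μ w v x ≥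
      lam * Real.exp (u0 x + v x) * (Real.exp (u0 x + v x) - 1) ^ 5 + 4 * π * N / vol μ) :
    ∀ x, v x ≤ -u0 x := by
  set f : V → ℝ := fun x => u0 x + v x with hf
  -- laplacian of f
  have hlin : ∀ x, lapl μ w f x = lapl μ w u0 x + lapl μ w v x := by
    intro x
    simp only [lapl, f]
    rw [← mul_add, ← Finset.sum_add_distrib]
    congr 1
    apply Finset.sum_congr rfl
    intro y _
    ring
  -- at a maximizer of f, lapl f ≤ 0
  obtain ⟨x0, _, hx0⟩ := Finset.exists_max_image Finset.univ f ⟨Classical.arbitrary V, Finset.mem_univ _⟩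
  have hmax : ∀ y, f y ≤ f x0 := fun y => hx0 y (Finset.mem_univ y)
  have hlap0 : lapl μ w f x0 ≤ 0 := by
    have : ∑ y, w x0 y * (f y - f x0) ≤ 0 := by
      apply Finset.sum_nonpos
      intro y _
      exact mul_nonpos_of_nonneg_of_nonpos (hnn x0 y) (by linarith [hmax y])
    have hμ := hmu x0
    have : (1 / μ x0) * ∑ y, w x0 y * (f y - f x0) ≤ 0 :=
      mul_nonpos_of_nonneg_of_nonpos (by positivity) this
    simpa [lapl] using this
  -- dirac sum nonneg
  have hdir : 0 ≤ ∑ s, dirac μ (p s) x0 := by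
    apply Finset.sum_nonneg
    intro s _
    simp only [dirac]
    split
    · exact le_of_lt (by have := hmu (p s); positivity)
    · exact le_refl 0
  -- combine
  have hkey : lam * Real.exp (f x0) * (Real.exp (f x0) - 1) ^ 5 ≤ 0 := by
    have h1 := hv x0
    have h2 := hu0 x0
    have h3 := hlin x0
    have hπ : (0:ℝ) ≤ 4 * π := by positivity
    nlinarith [mul_nonneg hπ hdir]
  have hfx0 : f x0 ≤ 0 := by
    by_contra h
    push_neg at h
    have h1 : (1:ℝ) < Real.exp (f x0) := by
      have := Real.exp_lt_exp.2 h
      simpa using this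
    have h2 : (0:ℝ) < Real.exp (f x0) - 1 := by linarith
    have : 0 < lam * Real.exp (f x0) * (Real.exp (f x0) - 1) ^ 5 := by positivity
    linarith
  intro x
  have := hmax x
  simp only [f] at this hfx0
  linarith
end

section
/- If the reduced equation Δv = λ e^{u_0+v}(e^{u_0+v} − 1)^5 + 4πN/Vol(V) admits a subsolution W_−, then it admits a solution w with W_−(x) ≤ w(x) ≤ −u_0(x) for all x ∈ V. -/
open Real

/-!
Sub- and supersolution method. With `K = 6λ` the map `t ↦ λ e^{u₀+t}(e^{u₀+t} − 1)^5 − K t` is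
antitone for `t ≤ −u₀`, and `Δ − K` is invertible and order-reversing by the maximum principle.
Hence `T v := (Δ − K)⁻¹ (λ e^{u₀+v}(e^{u₀+v} − 1)^5 + 4πN/Vol(V) − K v)` is a monotone self-map
of the order interval `[W₋, −u₀]`, where `−u₀` is a supersolution because the Dirac masses are
nonnegative, and `W₋ ≤ −u₀` by the maximum principle. A fixed point of `T`, which exists by
Knaster–Tarski since `[W₋, −u₀]` is a complete lattice, is the required solution.
-/

open Finset Set Function

theorem MonotoneOn.exists_fixedPoint_mem_Icc {α : Type*} [ConditionallyCompleteLattice α]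
    {a b : α} {T : α → α} (hmono : MonotoneOn T (Icc a b)) (hab : a ≤ b)
    (hmaps : MapsTo T (Icc a b) (Icc a b)) : ∃ v ∈ Icc a b, T v = v := by
  have : Fact (a ≤ b) := ⟨hab⟩
  let f : Icc a b →o Icc a b := ⟨hmaps.restrict, fun u v huv => hmono u.2 v.2 huv⟩
  exact ⟨f.lfp, f.lfp.2, congrArg Subtype.val f.map_lfp⟩

theorem monotoneOn_six_mul_sub_exp_mul_exp_sub_one_pow_five :
    MonotoneOn (fun t => 6 * t - exp t * (exp t - 1) ^ 5) (Iic 0) := by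
  have hderiv : ∀ t, HasDerivAt (fun t => 6 * t - exp t * (exp t - 1) ^ 5)
      (6 - (exp t * (exp t - 1) ^ 5 + exp t * (5 * (exp t - 1) ^ 4 * exp t))) t := fun t => by
    have hpow := ((hasDerivAt_exp t).sub_const 1).fun_pow 5
    exact ((hasDerivAt_id t).const_mul 6).sub ((hasDerivAt_exp t).mul hpow) |>.congr_deriv
      (by norm_num)
  refine monotoneOn_of_deriv_nonneg (convex_Iic 0) (by fun_prop)
    (fun t _ => (hderiv t).differentiableAt.differentiableWithinAt) fun t ht => ?_
  rw [interior_Iic, Set.mem_Iio] at ht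
  rw [(hderiv t).deriv]
  obtain ⟨hz0, hz1⟩ : 0 < exp t ∧ exp t < 1 := ⟨exp_pos t, exp_lt_one_iff.mpr ht⟩
  have hodd : exp t * (exp t - 1) ^ 5 ≤ 0 :=
    mul_nonpos_of_nonneg_of_nonpos hz0.le (Odd.pow_nonpos (by decide) (by linarith))
  have heven : (exp t * (exp t - 1) ^ 2) ^ 2 ≤ 1 := by
    rw [sq_le_one_iff_abs_le_one, abs_le]
    constructor <;> nlinarith [sq_nonneg (exp t - 1)]
  nlinarith

section GraphLaplacian

variable {V : Type*} [Fintype V] {μ : V → ℝ} {w : V → V → ℝ}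

variable (μ w) in
noncomputable def laplLinearMap : (V → ℝ) →ₗ[ℝ] V → ℝ where
  toFun := lapl μ w
  map_add' u v := by
    funext x
    simp only [lapl, Pi.add_apply, ← mul_add, ← sum_add_distrib]
    congr 1
    exact sum_congr rfl fun y _ => by ring
  map_smul' a u := by
    funext x
    simp only [lapl, Pi.smul_apply, smul_eq_mul, RingHom.id_apply, mul_sum]
    exact sum_congr rfl fun y _ => by ring

theorem lapl_add (u v : V → ℝ) : lapl μ w (u + v) = lapl μ w u + lapl μ w v :=
  (laplLinearMap μ w).map_add u v

theorem lapl_neg (u : V → ℝ) : lapl μ w (-u) = -lapl μ w u :=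
  (laplLinearMap μ w).map_neg u

theorem lapl_sub (u v : V → ℝ) : lapl μ w (u - v) = lapl μ w u - lapl μ w v :=
  (laplLinearMap μ w).map_sub u v

variable (μ w) in
noncomputable def shiftedLapl (K : ℝ) : (V → ℝ) →ₗ[ℝ] V → ℝ :=
  laplLinearMap μ w - K • LinearMap.id

theorem shiftedLapl_apply (K : ℝ) (u : V → ℝ) (x : V) :
    shiftedLapl μ w K u x = lapl μ w u x - K * u x :=
  rfl

variable (hnn : ∀ x y, 0 ≤ w x y) (hmu : ∀ x, 0 < μ x)
include hnn hmu

theorem lapl_nonpos_of_forall_le {u : V → ℝ} {x : V} (hx : ∀ y, u y ≤ u x) :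
    lapl μ w u x ≤ 0 :=
  mul_nonpos_of_nonneg_of_nonpos (one_div_pos.mpr (hmu x)).le <|
    sum_nonpos fun y _ => mul_nonpos_of_nonneg_of_nonpos (hnn x y) (sub_nonpos.mpr (hx y))

theorem nonpos_of_lapl_pos_of_pos {u : V → ℝ} (h : ∀ x, 0 < u x → 0 < lapl μ w u x)
    (x : V) : u x ≤ 0 := by
  obtain ⟨y, -, hy⟩ := exists_max_image univ u ⟨x, mem_univ x⟩
  by_contra! hux
  have hpos : 0 < u y := hux.trans_le (hy x (mem_univ x))
  exact (h y hpos).not_ge (lapl_nonpos_of_forall_le hnn hmu fun z => hy z (mem_univ z))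

theorem le_neg_of_lapl_ge {lam c : ℝ} (hlam : 0 < lam) {u0 Wm : V → ℝ}
    (hu0 : ∀ x, -c ≤ lapl μ w u0 x)
    (hWm : ∀ x, lam * exp (u0 x + Wm x) * (exp (u0 x + Wm x) - 1) ^ 5 + c ≤ lapl μ w Wm x) :
    Wm ≤ -u0 := fun x => by
  have hnonpos := nonpos_of_lapl_pos_of_pos hnn hmu (u := Wm + u0) (fun y hy => by
    rw [Pi.add_apply] at hy
    have hexp : 1 < exp (u0 y + Wm y) := one_lt_exp_iff.mpr (by linarith)
    have : 0 < lam * exp (u0 y + Wm y) * (exp (u0 y + Wm y) - 1) ^ 5 := by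
      have := sub_pos.mpr hexp
      positivity
    rw [lapl_add, Pi.add_apply]
    linarith [hu0 y, hWm y]) x
  rw [Pi.add_apply] at hnonpos
  rw [Pi.neg_apply]
  linarith

section Shifted

variable {K : ℝ} (hK : 0 < K)
include hK

theorem le_of_shiftedLapl_le {u v : V → ℝ}
    (h : ∀ x, shiftedLapl μ w K v x ≤ shiftedLapl μ w K u x) : u ≤ v := fun x => by
  have hdiff : ∀ x, (u - v) x ≤ 0 := nonpos_of_lapl_pos_of_pos hnn hmu fun x hx => by
    rw [Pi.sub_apply, sub_pos] at hx
    have := h x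
    rw [shiftedLapl_apply, shiftedLapl_apply] at this
    rw [lapl_sub, Pi.sub_apply]
    linarith [mul_lt_mul_of_pos_left hx hK]
  exact sub_nonpos.mp (hdiff x)

theorem shiftedLapl_injective : Injective (shiftedLapl μ w K) := fun u v h =>
  le_antisymm (le_of_shiftedLapl_le hnn hmu hK fun x => by rw [h])
    (le_of_shiftedLapl_le hnn hmu hK fun x => by rw [h])

theorem exists_lapl_eq_of_sub_super (F : V → ℝ → ℝ) {Wm Wp : V → ℝ} (hle : Wm ≤ Wp)
    (hFK : ∀ x s t, Wm x ≤ s → s ≤ t → t ≤ Wp x → F x t - K * t ≤ F x s - K * s)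
    (hWm : ∀ x, F x (Wm x) ≤ lapl μ w Wm x) (hWp : ∀ x, lapl μ w Wp x ≤ F x (Wp x)) :
    ∃ v, (∀ x, lapl μ w v x = F x (v x)) ∧ Wm ≤ v ∧ v ≤ Wp := by
  let L := LinearEquiv.ofInjectiveEndo _ (shiftedLapl_injective hnn hmu hK)
  let G : (V → ℝ) → V → ℝ := fun v x => F x (v x) - K * v x
  let T : (V → ℝ) → V → ℝ := fun v => L.symm (G v)
  have hT : ∀ v x, shiftedLapl μ w K (T v) x = G v x := fun v x =>
    congrFun (L.apply_symm_apply (G v)) x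
  have hG : ∀ u ∈ Icc Wm Wp, ∀ v ∈ Icc Wm Wp, u ≤ v → ∀ x, G v x ≤ G u x :=
    fun u hu v hv huv x => hFK x _ _ (hu.1 x) (huv x) (hv.2 x)
  have hmono : MonotoneOn T (Icc Wm Wp) := fun u hu v hv huv =>
    le_of_shiftedLapl_le hnn hmu hK fun x => by rw [hT, hT]; exact hG u hu v hv huv x
  have hmaps : MapsTo T (Icc Wm Wp) (Icc Wm Wp) := fun v hv => by
    have hWm_mem : Wm ∈ Icc Wm Wp := ⟨le_rfl, hle⟩
    have hWp_mem : Wp ∈ Icc Wm Wp := ⟨hle, le_rfl⟩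
    refine ⟨le_of_shiftedLapl_le hnn hmu hK fun x => ?_,
      le_of_shiftedLapl_le hnn hmu hK fun x => ?_⟩
    · calc shiftedLapl μ w K (T v) x = G v x := hT v x
        _ ≤ G Wm x := hG Wm hWm_mem v hv hv.1 x
        _ ≤ shiftedLapl μ w K Wm x := by rw [shiftedLapl_apply]; linarith [hWm x]
    · calc shiftedLapl μ w K Wp x ≤ G Wp x := by rw [shiftedLapl_apply]; linarith [hWp x]
        _ ≤ G v x := hG v hv Wp hWp_mem hv.2 x
        _ = shiftedLapl μ w K (T v) x := (hT v x).symm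
  obtain ⟨v, hv, hTv⟩ := hmono.exists_fixedPoint_mem_Icc hle hmaps
  refine ⟨v, fun x => ?_, hv⟩
  have := hT v x
  rw [hTv, shiftedLapl_apply] at this
  linarith

end Shifted

end GraphLaplacian

theorem solution_from_subsolution_general {V : Type*} [Fintype V] [DecidableEq V]
    (w : V → V → ℝ) (μ : V → ℝ)
    (hnn : ∀ x y, 0 ≤ w x y)
    (hmu : ∀ x, 0 < μ x)
    (N : ℕ) (p : Fin N → V)
    (u0 : V → ℝ)
    (hu0 : ∀ x, lapl μ w u0 x = -(4 * π * N / vol μ) + 4 * π * ∑ s, dirac μ (p s) x)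
    (lam : ℝ) (hlam : 0 < lam)
    (Wm : V → ℝ)
    (hWm : ∀ x, lapl μ w Wm x ≥
      lam * Real.exp (u0 x + Wm x) * (Real.exp (u0 x + Wm x) - 1) ^ 5 + 4 * π * N / vol μ) :
    ∃ v : V → ℝ,
      (∀ x, lapl μ w v x =
        lam * Real.exp (u0 x + v x) * (Real.exp (u0 x + v x) - 1) ^ 5 + 4 * π * N / vol μ) ∧
      (∀ x, Wm x ≤ v x) ∧ (∀ x, v x ≤ -u0 x) := by
  set c := 4 * π * N / vol μ
  have hu0c : ∀ x, -c ≤ lapl μ w u0 x := fun x => by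
    have hdirac : 0 ≤ ∑ s, dirac μ (p s) x := sum_nonneg fun s _ => by
      unfold dirac
      split_ifs
      exacts [(one_div_pos.mpr (hmu _)).le, le_rfl]
    linarith [hu0 x, mul_nonneg (mul_nonneg zero_le_four pi_pos.le) hdirac]
  have hFK (x : V) (s t : ℝ) (hst : s ≤ t) (ht : t ≤ -u0 x) :
      lam * exp (u0 x + t) * (exp (u0 x + t) - 1) ^ 5 + c - 6 * lam * t ≤
        lam * exp (u0 x + s) * (exp (u0 x + s) - 1) ^ 5 + c - 6 * lam * s := by
    have hmono := monotoneOn_six_mul_sub_exp_mul_exp_sub_one_pow_five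
      (mem_Iic.mpr (by linarith : u0 x + s ≤ 0)) (mem_Iic.mpr (by linarith : u0 x + t ≤ 0))
      (by linarith : u0 x + s ≤ u0 x + t)
    linarith [mul_le_mul_of_nonneg_left hmono hlam.le]
  exact exists_lapl_eq_of_sub_super hnn hmu (by positivity : 0 < 6 * lam) (Wp := -u0)
    (fun x t => lam * exp (u0 x + t) * (exp (u0 x + t) - 1) ^ 5 + c)
    (le_neg_of_lapl_ge hnn hmu hlam hu0c hWm) (fun x s t _ hst ht => hFK x s t hst ht) hWm
    fun x => by
      simp only [lapl_neg, Pi.neg_apply, add_neg_cancel, exp_zero, sub_self]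
      linarith [hu0c x]

/-- if the reduced equation admits a subsolution `W₋`, then it admits a
solution `w` with `W₋ ≤ w ≤ −u₀` on `V`. -/
theorem solution_from_subsolution {V : Type*} [Fintype V] [DecidableEq V] [Nonempty V]
    (w : V → V → ℝ) (μ : V → ℝ)
    (hsymm : ∀ x y, w x y = w y x) (hnn : ∀ x y, 0 ≤ w x y)
    (hconn : ∀ x y : V, Relation.ReflTransGen (fun a b => 0 < w a b) x y)
    (hmu : ∀ x, 0 < μ x)
    (N : ℕ) (hN : 1 ≤ N) (p : Fin N → V) (hp : Function.Injective p)
    (u0 : V → ℝ)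
    (hu0 : ∀ x, lapl μ w u0 x = -(4 * π * N / vol μ) + 4 * π * ∑ s, dirac μ (p s) x)
    (lam : ℝ) (hlam : 0 < lam)
    (Wm : V → ℝ)
    (hWm : ∀ x, lapl μ w Wm x ≥
      lam * Real.exp (u0 x + Wm x) * (Real.exp (u0 x + Wm x) - 1) ^ 5 + 4 * π * N / vol μ) :
    ∃ v : V → ℝ,
      (∀ x, lapl μ w v x =
        lam * Real.exp (u0 x + v x) * (Real.exp (u0 x + v x) - 1) ^ 5 + 4 * π * N / vol μ) ∧
      (∀ x, Wm x ≤ v x) ∧ (∀ x, v x ≤ -u0 x) :=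
  solution_from_subsolution_general w μ hnn hmu N p u0 hu0 lam hlam Wm hWm
end

section
/- There exists Λ > 0 such that for every λ ≥ Λ the generalized Chern–Simons equation Δu = λ e^u (e^u − 1)^5 + 4π Σ_{s=1}^N δ_{p_s} has a solution u : V → ℝ. -/
open Real

/-!
Write `L u (x) = Σ_y w(x,y)(u(y) − u(x))`, so that the equation reads
`L u = μ (λ e^u (e^u − 1)^5 + c)` with `c = 4π Σ_s δ_{p_s} ≥ 0`. By the maximum principle `L − μ`
is injective, hence invertible, so some `h` solves `L h = μ (h + c)`, and `h ≤ 0`. For `m ≤ min h`,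
`h − m ≥ 0` is a supersolution, and `h − 1` is a subsolution once `λ e^{m−1}(1 − e^{−1})^5 ≥ 1 − m`,
because `e^t (1 − e^t)^5 ≥ e^{m−1}(1 − e^{−1})^5` on `[m − 1, −1]`. A minimiser over the order
interval `[h − 1, h − m]` of the energy `¼ Σ_{a,b} w(a,b)(u(b) − u(a))² + Σ_x G_x(u(x))`, where
`G_x'` is the right-hand side at `x`, is a solution: each partial derivative vanishes at interior
values, and at an endpoint the sub- or supersolution inequality supplies the inequality that
minimality does not give.
-/
open Finset Function Set

noncomputable def combLapl {V : Type*} [Fintype V] (w : V → V → ℝ) : (V → ℝ) →ₗ[ℝ] V → ℝ :=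
  LinearMap.pi fun x => ∑ y, w x y • (LinearMap.proj (R := ℝ) (φ := fun _ => ℝ) y - .proj x)

section MaximumPrinciple

variable {V : Type*} [Fintype V] {w : V → V → ℝ}

theorem combLapl_apply (u : V → ℝ) (x : V) : combLapl w u x = ∑ y, w x y * (u y - u x) := by
  simp [combLapl]

theorem combLapl_le_combLapl (hnn : ∀ x y, 0 ≤ w x y) {u v : V → ℝ} (huv : u ≤ v) {x : V}
    (hx : u x = v x) : combLapl w u x ≤ combLapl w v x := by
  simp only [combLapl_apply, hx]
  gcongr with y
  · exact hnn x y
  · exact huv y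

theorem combLapl_const (c : ℝ) (x : V) : combLapl w (fun _ => c) x = 0 := by
  simp [combLapl_apply]

theorem combLapl_sub_const (u : V → ℝ) (c : ℝ) (x : V) :
    combLapl w (fun y => u y - c) x = combLapl w u x := by
  simp [combLapl_apply]

theorem nonpos_of_mul_le_combLapl {μ : V → ℝ} (hμ : ∀ x, 0 < μ x) (hnn : ∀ x y, 0 ≤ w x y)
    {u : V → ℝ} (hu : ∀ x, μ x * u x ≤ combLapl w u x) (x : V) : u x ≤ 0 := by
  obtain ⟨z, -, hz⟩ := exists_max_image univ u ⟨x, mem_univ x⟩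
  have h_max : combLapl w u z ≤ 0 := by
    simpa only [combLapl_const] using
      combLapl_le_combLapl hnn (fun y => hz y (mem_univ y)) (rfl : u z = (fun _ => u z) z)
  have : u z ≤ 0 := nonpos_of_mul_nonpos_right ((hu z).trans h_max) (hμ z)
  exact (hz x (mem_univ x)).trans this

theorem exists_combLapl_eq_mul_add {μ : V → ℝ} (hμ : ∀ x, 0 < μ x) (hnn : ∀ x y, 0 ≤ w x y)
    (g : V → ℝ) : ∃ h : V → ℝ, ∀ x, combLapl w h x = μ x * h x + g x := by
  let A : (V → ℝ) →ₗ[ℝ] V → ℝ := combLapl w - LinearMap.pi fun x => μ x • LinearMap.proj x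
  have hA : ∀ u x, A u x = combLapl w u x - μ x * u x := fun u x => by simp [A]
  have h_inj : Injective A := by
    refine (injective_iff_map_eq_zero A).2 fun u hu => funext fun x => ?_
    have h_le : ∀ v, A v = 0 → v x ≤ 0 := fun v hv =>
      nonpos_of_mul_le_combLapl hμ hnn (fun y => by
        have := congrFun hv y
        rw [hA, Pi.zero_apply] at this
        linarith) x
    have := h_le (-u) (by rw [map_neg, hu, neg_zero])
    rw [Pi.neg_apply] at this
    show u x = 0
    linarith [h_le u hu]
  obtain ⟨h, hh⟩ := LinearMap.injective_iff_surjective.1 h_inj g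
  exact ⟨h, fun x => by linarith [hA h x, congrFun hh x]⟩

end MaximumPrinciple

section OneSided

variable {φ : ℝ → ℝ} {lo hi a d : ℝ}

theorem IsMinOn.hasDerivAt_nonneg_of_lt_right (h : IsMinOn φ (Icc lo hi) a) (hd : HasDerivAt φ d a)
    (hlo : lo ≤ a) (hhi : a < hi) : 0 ≤ d := by
  have h_cone : hi - a ∈ posTangentConeAt (Icc lo hi) a := by
    refine mem_posTangentConeAt_of_segment_subset ?_
    rw [add_sub_cancel, segment_eq_Icc hhi.le]
    exact Icc_subset_Icc_left hlo
  have := h.localize.hasFDerivWithinAt_nonneg hd.hasFDerivAt.hasFDerivWithinAt h_cone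
  rw [ContinuousLinearMap.toSpanSingleton_apply, smul_eq_mul] at this
  exact (mul_nonneg_iff_of_pos_left (sub_pos.2 hhi)).1 this

theorem IsMinOn.hasDerivAt_nonpos_of_left_lt (h : IsMinOn φ (Icc lo hi) a) (hd : HasDerivAt φ d a)
    (hlo : lo < a) (hhi : a ≤ hi) : d ≤ 0 := by
  have h_cone : lo - a ∈ posTangentConeAt (Icc lo hi) a := by
    refine mem_posTangentConeAt_of_segment_subset ?_
    rw [add_sub_cancel, segment_symm, segment_eq_Icc hlo.le]
    exact Icc_subset_Icc_right hhi
  have := h.localize.hasFDerivWithinAt_nonneg hd.hasFDerivAt.hasFDerivWithinAt h_cone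
  rw [ContinuousLinearMap.toSpanSingleton_apply, smul_eq_mul] at this
  exact nonpos_of_mul_nonneg_right this (sub_neg.2 hlo)

end OneSided

noncomputable def lapEnergy {V : Type*} [Fintype V] (w : V → V → ℝ) (G : V → ℝ → ℝ)
    (u : V → ℝ) : ℝ :=
  (1 / 4) * ∑ a, ∑ b, w a b * (u b - u a) ^ 2 + ∑ a, G a (u a)

section Variational

variable {V : Type*} [Fintype V] {w : V → V → ℝ} {G g : V → ℝ → ℝ}

theorem hasDerivAt_lapEnergy_update [DecidableEq V] (hsymm : ∀ x y, w x y = w y x)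
    (hG : ∀ x t, HasDerivAt (G x) (g x t) t) (u : V → ℝ) (x : V) (t : ℝ) :
    HasDerivAt (fun s => lapEnergy w G (update u x s))
      (-combLapl w (update u x t) x + g x t) t := by
  set v := update u x t
  have hv : ∀ a, HasDerivAt (fun s => update u x s a) ((Pi.single x 1 : V → ℝ) a) t :=
    hasDerivAt_pi.1 (hasDerivAt_update u x t)
  have h_quad : HasDerivAt
      (fun s => (1 / 4) * ∑ a, ∑ b, w a b * (update u x s b - update u x s a) ^ 2)
      (-combLapl w v x) t := by
    refine ((HasDerivAt.fun_sum (u := univ) fun a _ => HasDerivAt.fun_sum (u := univ) fun b _ =>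
      (((hv b).sub (hv a)).pow 2).const_mul (w a b)).const_mul (1 / 4 : ℝ)).congr_deriv ?_
    simp only [Pi.sub_apply, Nat.cast_ofNat, Nat.add_one_sub_one, pow_one, mul_sub,
      Pi.single_apply, mul_ite, mul_one, mul_zero, sum_sub_distrib, sum_ite_eq', Finset.mem_univ,
      ↓reduceIte, update_self, sum_ite_irrel, sum_const_zero, combLapl_apply, neg_sub]
    simp only [hsymm _ x, v, update_self, ← sum_mul, mul_left_comm _ (2 : ℝ), ← mul_sum]
    ring
  have h_pot : HasDerivAt (fun s => ∑ a, G a (update u x s a)) (g x t) t := by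
    refine (HasDerivAt.fun_sum (u := univ) fun a _ => (hG a _).comp t (hv a)).congr_deriv ?_
    simp [Pi.single_apply]
  exact h_quad.add h_pot

end Variational

section SubSuper

variable {V : Type*} [Fintype V] {w : V → V → ℝ} {G g : V → ℝ → ℝ}

theorem exists_combLapl_eq_of_subsolution_of_supersolution (hsymm : ∀ x y, w x y = w y x)
    (hnn : ∀ x y, 0 ≤ w x y) (hG : ∀ x t, HasDerivAt (G x) (g x t) t) {lo hi : V → ℝ}
    (hle : lo ≤ hi) (hlo : ∀ x, g x (lo x) ≤ combLapl w lo x)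
    (hhi : ∀ x, combLapl w hi x ≤ g x (hi x)) :
    ∃ u ∈ Icc lo hi, ∀ x, combLapl w u x = g x (u x) := by
  classical
  have hG_cont : ∀ x, Continuous (G x) :=
    fun x => continuous_iff_continuousAt.2 fun t => (hG x t).continuousAt
  have h_cont : Continuous (lapEnergy w G) := by unfold lapEnergy; fun_prop
  obtain ⟨u, hu, hmin⟩ := isCompact_Icc.exists_isMinOn (nonempty_Icc.2 hle) h_cont.continuousOn
  refine ⟨u, hu, fun x => ?_⟩
  have h_min : IsMinOn (fun s => lapEnergy w G (update u x s)) (Icc (lo x) (hi x)) (u x) :=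
    fun s hs => by
      simpa only [mem_ofPred_eq, update_eq_self] using hmin
        ⟨le_update_iff.2 ⟨hs.1, fun y _ => hu.1 y⟩, update_le_iff.2 ⟨hs.2, fun y _ => hu.2 y⟩⟩
  have hd := hasDerivAt_lapEnergy_update hsymm hG u x (u x)
  rw [update_eq_self] at hd
  have h_nonneg : 0 ≤ -combLapl w u x + g x (u x) := by
    rcases (hu.2 x).lt_or_eq with h | h
    · exact h_min.hasDerivAt_nonneg_of_lt_right hd (hu.1 x) h
    · linarith [combLapl_le_combLapl hnn hu.2 h, hhi x, congrArg (g x) h]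
  have h_nonpos : -combLapl w u x + g x (u x) ≤ 0 := by
    rcases (hu.1 x).lt_or_eq with h | h
    · exact h_min.hasDerivAt_nonpos_of_left_lt hd h (hu.2 x)
    · linarith [combLapl_le_combLapl hnn hu.1 h, hlo x, congrArg (g x) h]
  linarith

end SubSuper

section ChernSimons

variable {V : Type*} [DecidableEq V] {μ : V → ℝ}

theorem dirac_nonneg (hμ : ∀ x, 0 < μ x) (p x : V) : 0 ≤ dirac μ p x := by
  unfold dirac
  split_ifs
  exacts [(one_div_pos.2 (hμ p)).le, le_rfl]

theorem isSol_of_combLapl_eq [Fintype V] {w : V → V → ℝ} (hμ : ∀ x, 0 < μ x) {N : ℕ}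
    {p : Fin N → V} {lam : ℝ} {u : V → ℝ}
    (hu : ∀ x, combLapl w u x =
      μ x * (lam * exp (u x) * (exp (u x) - 1) ^ 5 + 4 * π * ∑ s, dirac μ (p s) x)) :
    isSol μ w p lam u := fun x => by
  rw [lapl, ← combLapl_apply, hu, one_div, inv_mul_cancel_left₀ (hμ x).ne']

end ChernSimons

noncomputable def csThreshold (m : ℝ) : ℝ := (1 - m) / (exp (m - 1) * (1 - exp (-1)) ^ 5)

theorem csThreshold_pos {m : ℝ} (hm : m < 1) : 0 < csThreshold m := by
  have : exp (-1) < 1 := exp_lt_one_iff.2 (by norm_num)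
  unfold csThreshold
  have : 0 < 1 - exp (-1) := by linarith
  have : 0 < 1 - m := by linarith
  positivity

theorem mul_exp_mul_pow_five_le {m t lam : ℝ} (hmt : m - 1 ≤ t) (ht : t ≤ -1)
    (hlam : csThreshold m ≤ lam) : lam * exp t * (exp t - 1) ^ 5 ≤ t := by
  have h_exp : exp t ≤ exp (-1) := exp_le_exp.2 ht
  have h_exp_lt : exp (-1) < 1 := exp_lt_one_iff.2 (by norm_num)
  have h_bound : exp (m - 1) * (1 - exp (-1)) ^ 5 ≤ exp t * (1 - exp t) ^ 5 := by
    gcongr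
  have h_pos : 0 < exp (m - 1) * (1 - exp (-1)) ^ 5 := by
    have : 0 < 1 - exp (-1) := by linarith
    positivity
  have h_lam : 1 - m ≤ lam * (exp (m - 1) * (1 - exp (-1)) ^ 5) :=
    (div_le_iff₀ h_pos).1 hlam
  have h_lam0 : 0 ≤ lam := (csThreshold_pos (by linarith)).le.trans hlam
  calc lam * exp t * (exp t - 1) ^ 5 = -(lam * (exp t * (1 - exp t) ^ 5)) := by ring
    _ ≤ -(lam * (exp (m - 1) * (1 - exp (-1)) ^ 5)) := by gcongr
    _ ≤ t := by linarith

theorem mul_exp_mul_pow_five_nonneg {t lam : ℝ} (hlam : 0 ≤ lam) (ht : 0 ≤ t) :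
    0 ≤ lam * exp t * (exp t - 1) ^ 5 := by
  have : 0 ≤ exp t - 1 := by linarith [one_le_exp ht]
  positivity

theorem exists_isSol_of_csThreshold_le {V : Type*} [Fintype V] [DecidableEq V]
    {w : V → V → ℝ} {μ : V → ℝ} (hsymm : ∀ x y, w x y = w y x) (hnn : ∀ x y, 0 ≤ w x y)
    (hμ : ∀ x, 0 < μ x) {N : ℕ} (p : Fin N → V) {h : V → ℝ} {m lam : ℝ}
    (hh : ∀ x, combLapl w h x = μ x * (h x + 4 * π * ∑ s, dirac μ (p s) x))
    (h_nonpos : ∀ x, h x ≤ 0) (hm : ∀ x, m ≤ h x) (hlam : csThreshold m ≤ lam) :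
    ∃ u, isSol μ w p lam u := by
  set c : V → ℝ := fun x => 4 * π * ∑ s, dirac μ (p s) x
  have hG : ∀ x t, HasDerivAt (fun t => μ x * (lam / 6 * (exp t - 1) ^ 6 + c x * t))
      (μ x * (lam * exp t * (exp t - 1) ^ 5 + c x)) t := fun x t =>
    (((((hasDerivAt_exp t).sub_const 1).pow 6).const_mul _).add
      ((hasDerivAt_id t).const_mul _)).const_mul _ |>.congr_deriv (by push_cast; ring)
  obtain ⟨u, -, hu⟩ := exists_combLapl_eq_of_subsolution_of_supersolution hsymm hnn hG
    (lo := fun x => h x - 1) (hi := fun x => h x - m) (fun x => by linarith [hm x, h_nonpos x])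
    (fun x => by
      rw [combLapl_sub_const, hh]
      have := mul_exp_mul_pow_five_le (t := h x - 1) (by linarith [hm x])
        (by linarith [h_nonpos x]) hlam
      exact mul_le_mul_of_nonneg_left (by linarith) (hμ x).le)
    (fun x => by
      rw [combLapl_sub_const, hh]
      have hlam0 := (csThreshold_pos (by linarith [hm x, h_nonpos x])).le.trans hlam
      have := mul_exp_mul_pow_five_nonneg hlam0 (sub_nonneg.2 (hm x))
      exact mul_le_mul_of_nonneg_left (by linarith [h_nonpos x]) (hμ x).le)
  exact ⟨u, isSol_of_combLapl_eq hμ hu⟩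

theorem existence_large_lambda_general {V : Type*} [Fintype V] [DecidableEq V]
    (w : V → V → ℝ) (μ : V → ℝ)
    (hsymm : ∀ x y, w x y = w y x) (hnn : ∀ x y, 0 ≤ w x y)
    (hmu : ∀ x, 0 < μ x)
    (N : ℕ) (p : Fin N → V) :
    ∃ Lam : ℝ, 0 < Lam ∧ ∀ lam : ℝ, Lam ≤ lam → ∃ u : V → ℝ, isSol μ w p lam u := by
  have hc : ∀ x, 0 ≤ 4 * π * ∑ s, dirac μ (p s) x := fun x =>
    mul_nonneg (by positivity) (sum_nonneg fun s _ => dirac_nonneg hmu (p s) x)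
  obtain ⟨h, hh⟩ :=
    exists_combLapl_eq_mul_add hmu hnn fun x => μ x * (4 * π * ∑ s, dirac μ (p s) x)
  have h_nonpos : ∀ x, h x ≤ 0 := nonpos_of_mul_le_combLapl hmu hnn fun x => by
    linarith [hh x, mul_nonneg (hmu x).le (hc x)]
  obtain ⟨m, hm⟩ := Finite.bddBelow_range h
  refine ⟨csThreshold (min m 0), csThreshold_pos (by simp), fun lam hlam => ?_⟩
  refine exists_isSol_of_csThreshold_le hsymm hnn hmu p (fun x => ?_) h_nonpos
    (fun x => (min_le_left _ _).trans (hm ⟨x, rfl⟩)) hlam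
  rw [hh, mul_add]

/-- there exists `Λ > 0` such that for every `λ ≥ Λ` the generalized
Chern–Simons equation has a solution. -/
theorem existence_large_lambda {V : Type*} [Fintype V] [DecidableEq V] [Nonempty V]
    (w : V → V → ℝ) (μ : V → ℝ)
    (hsymm : ∀ x y, w x y = w y x) (hnn : ∀ x y, 0 ≤ w x y)
    (hconn : ∀ x y : V, Relation.ReflTransGen (fun a b => 0 < w a b) x y)
    (hmu : ∀ x, 0 < μ x)
    (N : ℕ) (hN : 1 ≤ N) (p : Fin N → V) (hp : Function.Injective p) :
    ∃ Lam : ℝ, 0 < Lam ∧ ∀ lam : ℝ, Lam ≤ lam → ∃ u : V → ℝ, isSol μ w p lam u :=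
  existence_large_lambda_general w μ hsymm hnn hmu N p
end

section
/- Every solution u : V → ℝ of the generalized Chern–Simons equation Δu = λ e^u (e^u − 1)^5 + 4π Σ_{s=1}^N δ_{p_s} with λ > 0 satisfies u(x) < 0 for all x ∈ V. -/
open Real

/-- every solution of the generalized Chern–Simons equation with `λ > 0`
is negative on `V`. -/
theorem solution_negative {V : Type*} [Fintype V] [DecidableEq V] [Nonempty V]
    (w : V → V → ℝ) (μ : V → ℝ)
    (hsymm : ∀ x y, w x y = w y x) (hnn : ∀ x y, 0 ≤ w x y)
    (hconn : ∀ x y : V, Relation.ReflTransGen (fun a b => 0 < w a b) x y)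
    (hmu : ∀ x, 0 < μ x)
    (N : ℕ) (hN : 1 ≤ N) (p : Fin N → V) (hp : Function.Injective p)
    (lam : ℝ) (hlam : 0 < lam) (u : V → ℝ) (hu : isSol μ w p lam u) :
    ∀ x, u x < 0 := by
  by_contra h
  push_neg at h
  obtain ⟨z, hz⟩ := h
  obtain ⟨x₀, hx₀⟩ := Finite.exists_max u
  have hM : 0 ≤ u x₀ := le_trans hz (hx₀ z)
  have hdirac : ∀ (q x : V), 0 ≤ dirac μ q x := by
    intro q x
    unfold dirac
    split
    · have := hmu q; positivity
    · exact le_refl 0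
  -- key lemma at any maximum point
  have key : ∀ x : V, (∀ y, u y ≤ u x) → 0 ≤ u x →
      u x = 0 ∧ ∀ y, 0 < w x y → u y = u x := by
    intro x hmax hnn0
    have hA : 0 ≤ lam * Real.exp (u x) * (Real.exp (u x) - 1) ^ 5 := by
      have h1 : (1 : ℝ) ≤ Real.exp (u x) := Real.one_le_exp hnn0
      have : 0 ≤ (Real.exp (u x) - 1) ^ 5 := pow_nonneg (by linarith) 5
      positivity
    have hB : 0 ≤ 4 * π * ∑ s, dirac μ (p s) x := by
      have : 0 ≤ ∑ s, dirac μ (p s) x :=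
        Finset.sum_nonneg fun s _ => hdirac (p s) x
      have hπ : 0 < π := Real.pi_pos
      positivity
    have hterm : ∀ y ∈ Finset.univ, w x y * (u y - u x) ≤ 0 := by
      intro y _
      exact mul_nonpos_iff.mpr (Or.inl ⟨hnn x y, by linarith [hmax y]⟩)
    have hsum : ∑ y, w x y * (u y - u x) ≤ 0 := Finset.sum_nonpos hterm
    have hlap : lapl μ w u x ≤ 0 := by
      unfold lapl
      have : 0 ≤ 1 / μ x := by have := hmu x; positivity
      exact mul_nonpos_iff.mpr (Or.inl ⟨this, hsum⟩)
    have heq := hu x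
    have hlap0 : lapl μ w u x = 0 := le_antisymm hlap (by rw [heq]; linarith)
    have hA0 : lam * Real.exp (u x) * (Real.exp (u x) - 1) ^ 5 = 0 := by
      rw [hlap0] at heq; linarith
    have hux : u x = 0 := by
      have he : Real.exp (u x) ≠ 0 := (Real.exp_pos _).ne'
      have h5 : (Real.exp (u x) - 1) ^ 5 = 0 := by
        rcases mul_eq_zero.mp hA0 with h | h
        · rcases mul_eq_zero.mp h with h | h
          · exact absurd h hlam.ne'
          · exact absurd h he
        · exact h
      have : Real.exp (u x) - 1 = 0 := pow_eq_zero_iff (by norm_num) |>.mp h5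
      have : Real.exp (u x) = 1 := by linarith
      exact Real.exp_eq_exp.mp (by rw [Real.exp_zero]; exact this)
    refine ⟨hux, fun y hwy => ?_⟩
    have hsum0 : ∑ y, w x y * (u y - u x) = 0 := by
      unfold lapl at hlap0
      have hμ : (1 : ℝ) / μ x ≠ 0 := by
        have := hmu x; positivity
      exact (mul_eq_zero.mp hlap0).resolve_left hμ
    have := (Finset.sum_eq_zero_iff_of_nonpos hterm).mp hsum0 y (Finset.mem_univ y)
    have : u y - u x = 0 := (mul_eq_zero.mp this).resolve_left hwy.ne'
    linarith
  obtain ⟨hx0zero, -⟩ := key x₀ hx₀ hM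
  -- propagate: u ≡ 0
  have hall : ∀ y, u y = 0 := by
    intro y
    have := hconn x₀ y
    induction this with
    | refl => exact hx0zero
    | tail _ hbc ih =>
      rename_i b c _
      have hbmax : ∀ z, u z ≤ u b := by
        intro z; rw [ih, ← hx0zero]; exact hx₀ z
      obtain ⟨-, hstep⟩ := key b hbmax (by rw [ih])
      rw [hstep c hbc, ih]
  -- contradiction at p ⟨0, hN⟩
  set i0 : Fin N := ⟨0, hN⟩
  have heq := hu (p i0)
  have hlapz : lapl μ w u (p i0) = 0 := by
    unfold lapl
    have : ∀ y ∈ Finset.univ, w (p i0) y * (u y - u (p i0)) = 0 := by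
      intro y _; rw [hall y, hall (p i0)]; ring
    rw [Finset.sum_eq_zero this, mul_zero]
  have hAz : lam * Real.exp (u (p i0)) * (Real.exp (u (p i0)) - 1) ^ 5 = 0 := by
    rw [hall (p i0)]; simp
  have hsumpos : 0 < ∑ s, dirac μ (p s) (p i0) := by
    have h1 : dirac μ (p i0) (p i0) = 1 / μ (p i0) := by
      unfold dirac; simp
    have hpos : 0 < dirac μ (p i0) (p i0) := by
      rw [h1]; have := hmu (p i0); positivity
    calc 0 < dirac μ (p i0) (p i0) := hpos
      _ ≤ ∑ s, dirac μ (p s) (p i0) :=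
        Finset.single_le_sum (fun s _ => hdirac (p s) (p i0)) (Finset.mem_univ i0)
  have hπ : 0 < π := Real.pi_pos
  rw [hlapz, hAz] at heq
  nlinarith [mul_pos (mul_pos (by norm_num : (0:ℝ) < 4) hπ) hsumpos]
end

section
/- (Palais–Smale condition) Fix λ > 0. Let (v_n) be a sequence of functions V → ℝ such that I_λ(v_n) → α for some α ∈ ℝ and such that ε_n → 0, where ε_n is the smallest constant for which |∫_V Γ(v_n, φ) dμ + λ ∫_V e^{u_0+v_n}(e^{u_0+v_n} − 1)^5 φ dμ + (4πN/Vol(V)) ∫_V φ dμ| ≤ ε_n ‖φ‖_{W^{1,2}} holds for all φ : V → ℝ. Then (v_n) has a subsequence converging (pointwise on V, equivalently in W^{1,2}) to some v : V → ℝ. -/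
/-!
Write `f(t) = eᵗ (eᵗ − 1)⁵` and `c = 4πN / Vol(V) > 0`. Testing the almost-criticality of `vₙ`
with `φ ≡ 1` gives `λ ∫ f(u₀ + vₙ) + c Vol(V) ≤ εₙ √Vol(V)`. As `f ≥ -1`, this bounds
`f(u₀ + vₙ)` from above at every vertex, hence `vₙ` from above, and bounds `λ f(u₀ + vₙ) + c`
in `L¹`; testing with `φ = vₙ − vₙ(x₀)` then bounds the Dirichlet energy of `vₙ`, and hence its
oscillation by a Poincaré inequality along paths of the connected graph. Once `εₙ` is small,
`∫ f(u₀ + vₙ) < 0`, so `e^{u₀ + vₙ} ≥ c / 2λ` at some vertex, which together with the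
oscillation bound bounds `vₙ` from below. A bounded sequence in the finite-dimensional space
`V → ℝ` has a convergent subsequence.
-/

open Real

open Finset

section Integral

variable {V : Type*} [Fintype V] {μ : V → ℝ}

lemma integ_add (f g : V → ℝ) : integ μ (fun x => f x + g x) = integ μ f + integ μ g := by
  simp only [integ, mul_add, sum_add_distrib]

lemma integ_const_mul (a : ℝ) (f : V → ℝ) : integ μ (fun x => a * f x) = a * integ μ f := by
  simp only [integ, mul_sum, mul_left_comm]

lemma integ_const (a : ℝ) : integ μ (fun _ => a) = a * vol μ := by
  rw [integ, vol, mul_sum]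
  simp only [mul_comm]

lemma integ_mono (hμ : ∀ x, 0 ≤ μ x) {f g : V → ℝ} (h : ∀ x, f x ≤ g x) :
    integ μ f ≤ integ μ g :=
  sum_le_sum fun x _ => mul_le_mul_of_nonneg_left (h x) (hμ x)

lemma mul_le_integ (hμ : ∀ x, 0 ≤ μ x) {f : V → ℝ} (hf : ∀ x, 0 ≤ f x) (x : V) :
    μ x * f x ≤ integ μ f :=
  single_le_sum (f := fun y => μ y * f y) (fun y _ => mul_nonneg (hμ y) (hf y)) (mem_univ x)

lemma abs_integ_mul_le (hμ : ∀ x, 0 ≤ μ x) (g : V → ℝ) {φ : V → ℝ} {K : ℝ}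
    (hφ : ∀ x, |φ x| ≤ K) : |integ μ (fun x => g x * φ x)| ≤ integ μ (fun x => |g x|) * K := by
  calc |integ μ (fun x => g x * φ x)| ≤ ∑ x, |μ x * (g x * φ x)| := abs_sum_le_sum_abs _ _
    _ ≤ ∑ x, μ x * (K * |g x|) := sum_le_sum fun x _ => by
        rw [abs_mul, abs_of_nonneg (hμ x), abs_mul, mul_comm K]
        exact mul_le_mul_of_nonneg_left (mul_le_mul_of_nonneg_left (hφ x) (abs_nonneg _)) (hμ x)
    _ = integ μ (fun x => |g x|) * K := by rw [mul_comm, ← integ_const_mul]; rfl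

lemma vol_pos [Nonempty V] (hμ : ∀ x, 0 < μ x) : 0 < vol μ :=
  sum_pos (fun x _ => hμ x) univ_nonempty

lemma exists_le_of_integ_le [Nonempty V] (hμ : ∀ x, 0 < μ x) {f : V → ℝ} {a : ℝ}
    (h : integ μ f ≤ a * vol μ) : ∃ x, f x ≤ a := by
  by_contra! hlt
  refine h.not_gt ?_
  rw [← integ_const]
  exact sum_lt_sum_of_nonempty univ_nonempty fun x _ => mul_lt_mul_of_pos_left (hlt x) (hμ x)

end Integral

section Gradient

variable {V : Type*} [Fintype V] {μ : V → ℝ} {w : V → V → ℝ}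

lemma gradSq_nonneg (hμ : ∀ x, 0 ≤ μ x) (hw : ∀ x y, 0 ≤ w x y) (u : V → ℝ) (x : V) :
    0 ≤ gradSq μ w u x :=
  mul_nonneg (by have := hμ x; positivity)
    (sum_nonneg fun y _ => mul_nonneg (hw x y) (sq_nonneg _))

lemma gradSq_sub_const (u : V → ℝ) (a : ℝ) : gradSq μ w (fun y => u y - a) = gradSq μ w u := by
  funext x
  simp only [gradSq, sub_sub_sub_cancel_right]

lemma gamma_const_right (u : V → ℝ) (a : ℝ) : gamma μ w u (fun _ => a) = 0 := by
  funext x; simp [gamma]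

lemma gamma_sub_const_right_self (u : V → ℝ) (a : ℝ) :
    gamma μ w u (fun y => u y - a) = gradSq μ w u := by
  funext x
  simp only [gamma, gradSq, sub_sub_sub_cancel_right, mul_assoc, ← sq]

lemma sobNorm_one : sobNorm μ w (fun _ => 1) = √(vol μ) := by
  simp [sobNorm, gradSq, integ, vol]

lemma sobNorm_le_of_abs_le (hμ : ∀ x, 0 ≤ μ x) {φ : V → ℝ} {K : ℝ} (hφ : ∀ x, |φ x| ≤ K) :
    sobNorm μ w φ ≤ √(integ μ (gradSq μ w φ) + K ^ 2 * vol μ) := by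
  rw [sobNorm, integ_add, ← integ_const]
  gcongr
  refine integ_mono hμ fun x => ?_
  rw [← sq_abs]
  exact pow_le_pow_left₀ (abs_nonneg _) (hφ x) 2

lemma mul_sq_sub_le_two_mul_integ_gradSq (hμ : ∀ x, 0 < μ x) (hw : ∀ x y, 0 ≤ w x y)
    (u : V → ℝ) (a b : V) : w a b * (u b - u a) ^ 2 ≤ 2 * integ μ (gradSq μ w u) := by
  have hedge : w a b * (u b - u a) ^ 2 ≤ ∑ y, w a y * (u y - u a) ^ 2 :=
    single_le_sum (f := fun y => w a y * (u y - u a) ^ 2)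
      (fun y _ => mul_nonneg (hw a y) (sq_nonneg _)) (mem_univ b)
  have hvertex := mul_le_integ (fun x => (hμ x).le) (gradSq_nonneg (fun x => (hμ x).le) hw u) a
  have hμa : μ a * gradSq μ w u a = (∑ y, w a y * (u y - u a) ^ 2) / 2 := by
    rw [gradSq]; field_simp [(hμ a).ne']
  linarith

lemma abs_sub_le_of_pos_weight (hμ : ∀ x, 0 < μ x) (hw : ∀ x y, 0 ≤ w x y) (u : V → ℝ)
    {a b : V} (hab : 0 < w a b) :
    |u b - u a| ≤ √(2 / w a b) * √(integ μ (gradSq μ w u)) := by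
  rw [← sqrt_mul (by positivity), ← sqrt_sq_eq_abs]
  refine sqrt_le_sqrt ?_
  rw [div_mul_eq_mul_div, le_div_iff₀ hab, mul_comm]
  exact mul_sq_sub_le_two_mul_integ_gradSq hμ hw u a b

lemma exists_abs_sub_le_mul_sqrt_integ_gradSq (hμ : ∀ x, 0 < μ x) (hw : ∀ x y, 0 ≤ w x y)
    (hconn : ∀ x y : V, Relation.ReflTransGen (fun a b => 0 < w a b) x y) :
    ∃ C, 0 ≤ C ∧ ∀ (u : V → ℝ) (x y : V), |u y - u x| ≤ C * √(integ μ (gradSq μ w u)) := by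
  have hpair : ∀ x y : V, ∃ C, 0 ≤ C ∧
      ∀ u : V → ℝ, |u y - u x| ≤ C * √(integ μ (gradSq μ w u)) := by
    intro x y
    induction hconn x y with
    | refl => exact ⟨0, le_rfl, fun u => by simp⟩
    | @tail b z _ hbz ih =>
      obtain ⟨C, hC0, hC⟩ := ih
      refine ⟨C + √(2 / w b z), by positivity, fun u => ?_⟩
      calc |u z - u x| ≤ |u z - u b| + |u b - u x| := abs_sub_le _ _ _
        _ ≤ √(2 / w b z) * √(integ μ (gradSq μ w u)) + C * √(integ μ (gradSq μ w u)) :=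
            add_le_add (abs_sub_le_of_pos_weight hμ hw u hbz) (hC u)
        _ = (C + √(2 / w b z)) * √(integ μ (gradSq μ w u)) := by ring
  choose C hC0 hC using hpair
  obtain ⟨M, hM⟩ := Finite.bddAbove_range (fun q : V × V => C q.1 q.2)
  refine ⟨max M 0, le_max_right _ _, fun u x y => (hC x y u).trans ?_⟩
  exact mul_le_mul_of_nonneg_right ((hM ⟨(x, y), rfl⟩).trans (le_max_left _ _)) (by positivity)

end Gradient

/-- The derivative of the potential `(eᵗ − 1)⁶ / 6` in `energy`. -/
noncomputable def csForce (t : ℝ) : ℝ := exp t * (exp t - 1) ^ 5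

lemma neg_exp_le_csForce (t : ℝ) : -exp t ≤ csForce t := by
  have h := exp_pos t
  have : -1 ≤ (exp t - 1) ^ 5 := by
    have := (Odd.pow_le_pow (by decide : Odd 5)).2 (show -1 ≤ exp t - 1 by linarith)
    linarith
  unfold csForce; nlinarith

lemma neg_one_le_csForce (t : ℝ) : -1 ≤ csForce t := by
  rcases le_total (exp t) 1 with h | h
  · linarith [neg_exp_le_csForce t]
  · unfold csForce
    have : 0 ≤ (exp t - 1) ^ 5 := pow_nonneg (by linarith) 5
    nlinarith [exp_pos t]

lemma exp_sub_two_le_csForce (t : ℝ) : exp t - 2 ≤ csForce t := by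
  rcases le_total (exp t) 1 with h | h
  · linarith [neg_one_le_csForce t]
  unfold csForce
  rcases le_total (exp t) 2 with h' | h'
  · have : 0 ≤ (exp t - 1) ^ 5 := pow_nonneg (by linarith) 5
    nlinarith
  · have : 1 ≤ (exp t - 1) ^ 5 := one_le_pow₀ (by linarith)
    nlinarith

section Energy

variable {V : Type*} [Fintype V] {μ : V → ℝ} {w : V → V → ℝ}

lemma dEnergy_eq (u0 : V → ℝ) (N : ℕ) (lam : ℝ) (v φ : V → ℝ) :
    dEnergy μ w u0 N lam v φ = integ μ (gamma μ w v φ)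
      + integ μ (fun x => (lam * csForce (u0 x + v x) + 4 * π * N / vol μ) * φ x) := by
  simp only [dEnergy, csForce, integ, mul_sum, add_assoc, ← sum_add_distrib]
  exact sum_congr rfl fun x _ => by ring

lemma dEnergy_one (u0 : V → ℝ) (N : ℕ) (lam : ℝ) (v : V → ℝ) :
    dEnergy μ w u0 N lam v (fun _ => 1)
      = lam * integ μ (fun x => csForce (u0 x + v x)) + 4 * π * N / vol μ * vol μ := by
  simp only [dEnergy_eq, gamma_const_right, mul_one, integ_add, integ_const_mul, integ_const]
  simp [integ]

lemma le_log_of_integ_csForce_le (hμ : ∀ x, 0 < μ x) {u : V → ℝ} {B : ℝ}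
    (hB : integ μ (fun x => csForce (u x)) ≤ B) (x : V) :
    u x ≤ log ((B + vol μ) / μ x + 2) := by
  have hpt : μ x * (csForce (u x) + 1) ≤ B + vol μ := by
    calc μ x * (csForce (u x) + 1) ≤ integ μ (fun y => csForce (u y) + 1) :=
          mul_le_integ (f := fun y => csForce (u y) + 1) (fun y => (hμ y).le)
            (fun y => by linarith [neg_one_le_csForce (u y)]) x
      _ = integ μ (fun y => csForce (u y)) + vol μ := by rw [integ_add, integ_const, one_mul]
      _ ≤ B + vol μ := by linarith
  have hforce : csForce (u x) + 1 ≤ (B + vol μ) / μ x := by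
    rw [le_div_iff₀ (hμ x), mul_comm]; exact hpt
  have hexp : exp (u x) ≤ (B + vol μ) / μ x + 2 := by
    linarith [exp_sub_two_le_csForce (u x)]
  exact (le_log_iff_exp_le ((exp_pos _).trans_le hexp)).2 hexp

lemma exists_log_le_of_integ_csForce_le [Nonempty V] (hμ : ∀ x, 0 < μ x) {u : V → ℝ} {κ : ℝ}
    (hκ : 0 < κ) (h : integ μ (fun x => csForce (u x)) ≤ -κ * vol μ) : ∃ x, log κ ≤ u x := by
  obtain ⟨x, hx⟩ := exists_le_of_integ_le hμ h
  exact ⟨x, (log_le_iff_le_exp hκ).2 (by linarith [neg_exp_le_csForce (u x)])⟩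

lemma integ_abs_mul_csForce_add_le (hμ : ∀ x, 0 ≤ μ x) {lam c : ℝ} (hlam : 0 ≤ lam) (hc : 0 ≤ c)
    (u : V → ℝ) :
    integ μ (fun x => |lam * csForce (u x) + c|)
      ≤ lam * integ μ (fun x => csForce (u x)) + c * vol μ + 2 * lam * vol μ := by
  calc integ μ (fun x => |lam * csForce (u x) + c|)
      ≤ integ μ (fun x => lam * csForce (u x) + (c + 2 * lam)) := integ_mono hμ fun x => by
        have := neg_one_le_csForce (u x)
        exact abs_le.2 ⟨by nlinarith, by linarith⟩
    _ = _ := by rw [integ_add, integ_const_mul, integ_const]; ring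

lemma sqrt_integ_gradSq_le [Nonempty V] (hμ : ∀ x, 0 ≤ μ x) (hw : ∀ x y, 0 ≤ w x y) {C : ℝ}
    (hC0 : 0 ≤ C) (hC : ∀ (u : V → ℝ) (x y : V), |u y - u x| ≤ C * √(integ μ (gradSq μ w u)))
    {v g : V → ℝ} {M : ℝ} (hg : integ μ (fun x => |g x|) ≤ M)
    (hv : ∀ φ, |integ μ (gamma μ w v φ) + integ μ (fun x => g x * φ x)| ≤ sobNorm μ w φ) :
    √(integ μ (gradSq μ w v)) ≤ √(1 + C ^ 2 * vol μ) + M * C := by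
  obtain ⟨x₀⟩ := ‹Nonempty V›
  set D := integ μ (gradSq μ w v)
  set s := √D
  have hD : 0 ≤ D := sum_nonneg fun x _ => mul_nonneg (hμ x) (gradSq_nonneg hμ hw v x)
  have hs : s ^ 2 = D := sq_sqrt hD
  have hφ : ∀ x, |v x - v x₀| ≤ C * s := fun x => hC v x₀ x
  have hnorm : sobNorm μ w (fun x => v x - v x₀) ≤ s * √(1 + C ^ 2 * vol μ) := by
    refine (sobNorm_le_of_abs_le hμ hφ).trans_eq ?_
    rw [gradSq_sub_const]
    change √(D + _) = _
    rw [← hs, show s ^ 2 + (C * s) ^ 2 * vol μ = s ^ 2 * (1 + C ^ 2 * vol μ) by ring,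
      sqrt_mul (sq_nonneg s), sqrt_sq (sqrt_nonneg D)]
  have hsource : |integ μ (fun x => g x * (v x - v x₀))| ≤ M * (C * s) :=
    (abs_integ_mul_le hμ g hφ).trans (mul_le_mul_of_nonneg_right hg (by positivity))
  have hvar := hv (fun x => v x - v x₀)
  rw [gamma_sub_const_right_self] at hvar
  have hs2 : s * s ≤ s * (√(1 + C ^ 2 * vol μ) + M * C) := by
    have := (abs_le.1 hvar).2
    have := (abs_le.1 hsource).1
    nlinarith
  have hM : 0 ≤ M := (sum_nonneg fun x _ => mul_nonneg (hμ x) (abs_nonneg _)).trans hg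
  have hK : 0 ≤ √(1 + C ^ 2 * vol μ) + M * C := by positivity
  nlinarith [sqrt_nonneg D]

lemma lam_mul_integ_csForce_add_le {u0 v : V → ℝ} {N : ℕ} {lam e : ℝ}
    (hv : ∀ φ, |dEnergy μ w u0 N lam v φ| ≤ e * sobNorm μ w φ) :
    lam * integ μ (fun x => csForce (u0 x + v x)) + 4 * π * N / vol μ * vol μ
      ≤ e * √(vol μ) := by
  have := (abs_le.1 (hv fun _ => 1)).2
  rwa [dEnergy_one, sobNorm_one] at this

theorem exists_forall_le_of_abs_dEnergy_le (hμ : ∀ x, 0 < μ x) (N : ℕ) (u0 : V → ℝ) {lam : ℝ}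
    (hlam : 0 < lam) :
    ∃ A : V → ℝ, ∀ (v : V → ℝ) (e : ℝ), e ≤ 1 →
      (∀ φ, |dEnergy μ w u0 N lam v φ| ≤ e * sobNorm μ w φ) → ∀ x, v x ≤ A x := by
  refine ⟨fun x => log ((√(vol μ) / lam + vol μ) / μ x + 2) - u0 x, fun v e he hv x => ?_⟩
  have hc : 0 ≤ 4 * π * N / vol μ * vol μ :=
    mul_nonneg (div_nonneg (by positivity) (sum_nonneg fun x _ => (hμ x).le))
      (sum_nonneg fun x _ => (hμ x).le)
  have hF : integ μ (fun x => csForce (u0 x + v x)) ≤ √(vol μ) / lam := by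
    rw [le_div_iff₀ hlam]
    nlinarith [lam_mul_integ_csForce_add_le hv, sqrt_nonneg (vol μ)]
  have := le_log_of_integ_csForce_le hμ (u := fun x => u0 x + v x) hF x
  linarith

theorem exists_forall_ge_of_abs_dEnergy_le [Nonempty V] (hμ : ∀ x, 0 < μ x)
    (hw : ∀ x y, 0 ≤ w x y) (hconn : ∀ x y : V, Relation.ReflTransGen (fun a b => 0 < w a b) x y)
    {N : ℕ} (hN : 1 ≤ N) (u0 : V → ℝ) {lam : ℝ} (hlam : 0 < lam) :
    ∃ δ, 0 < δ ∧ δ ≤ 1 ∧ ∃ L, ∀ (v : V → ℝ) (e : ℝ), e ≤ δ →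
      (∀ φ, |dEnergy μ w u0 N lam v φ| ≤ e * sobNorm μ w φ) → ∀ x, L ≤ v x := by
  set c := 4 * π * N / vol μ
  have hvol := vol_pos hμ
  have hc : 0 < c := div_pos (mul_pos (by positivity) (by exact_mod_cast hN)) hvol
  obtain ⟨CP, hCP0, hCP⟩ := exists_abs_sub_le_mul_sqrt_integ_gradSq hμ hw hconn
  obtain ⟨U, hU⟩ := Finite.bddAbove_range u0
  -- `δ` is small enough for the test `φ ≡ 1` to force `∫ f(u₀ + v) < 0`.
  set δ := min 1 (c * √(vol μ) / 2)
  set M := √(vol μ) + 2 * lam * vol μ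
  refine ⟨δ, by positivity, min_le_left _ _,
    log (c / (2 * lam)) - U - CP * (√(1 + CP ^ 2 * vol μ) + M * CP), fun v e he hv x => ?_⟩
  have htest : lam * integ μ (fun x => csForce (u0 x + v x)) + c * vol μ ≤ δ * √(vol μ) :=
    (lam_mul_integ_csForce_add_le hv).trans
      (mul_le_mul_of_nonneg_right he (sqrt_nonneg _))
  have hvar : ∀ φ, |integ μ (gamma μ w v φ)
      + integ μ (fun x => (lam * csForce (u0 x + v x) + c) * φ x)| ≤ sobNorm μ w φ := by
    intro φ
    rw [← dEnergy_eq]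
    exact (hv φ).trans (mul_le_of_le_one_left (sqrt_nonneg _) (he.trans (min_le_left _ _)))
  have hD := sqrt_integ_gradSq_le (fun x => (hμ x).le) hw hCP0 hCP
    ((integ_abs_mul_csForce_add_le (fun x => (hμ x).le) hlam.le hc.le _).trans
      (by nlinarith [min_le_left 1 (c * √(vol μ) / 2), sqrt_nonneg (vol μ)] : _ ≤ M)) hvar
  have hδ : δ * √(vol μ) ≤ c * vol μ / 2 := by
    calc δ * √(vol μ) ≤ c * √(vol μ) / 2 * √(vol μ) :=
          mul_le_mul_of_nonneg_right (min_le_right _ _) (sqrt_nonneg _)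
      _ = c * vol μ / 2 := by rw [mul_div_right_comm, mul_assoc, mul_self_sqrt hvol.le]; ring
  have hneg : integ μ (fun x => csForce (u0 x + v x)) ≤ -(c / (2 * lam)) * vol μ := by
    refine le_of_mul_le_mul_left ?_ hlam
    rw [show lam * (-(c / (2 * lam)) * vol μ) = -(c * vol μ / 2) by field_simp]
    linarith
  obtain ⟨x₀, hx₀⟩ := exists_log_le_of_integ_csForce_le hμ (u := fun x => u0 x + v x)
    (by positivity) hneg
  have hosc := (abs_le.1 (hCP v x₀ x)).1
  have hu0 := hU ⟨x₀, rfl⟩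
  have := mul_le_mul_of_nonneg_left hD hCP0
  linarith

end Energy

theorem palais_smale_general {V : Type*} [Fintype V] [Nonempty V]
    (w : V → V → ℝ) (μ : V → ℝ)
    (hnn : ∀ x y, 0 ≤ w x y)
    (hconn : ∀ x y : V, Relation.ReflTransGen (fun a b => 0 < w a b) x y)
    (hmu : ∀ x, 0 < μ x)
    (N : ℕ) (hN : 1 ≤ N)
    (u0 : V → ℝ)
    (lam : ℝ) (hlam : 0 < lam)
    (v : ℕ → V → ℝ)
    (ε : ℕ → ℝ)
    (hεbound : ∀ n, ∀ φ : V → ℝ,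
      |dEnergy μ w u0 N lam (v n) φ| ≤ ε n * sobNorm μ w φ)
    (hε0 : Filter.Tendsto ε Filter.atTop (nhds 0)) :
    ∃ (σ : ℕ → ℕ) (v0 : V → ℝ), StrictMono σ ∧
      ∀ x, Filter.Tendsto (fun n => v (σ n) x) Filter.atTop (nhds (v0 x)) := by
  obtain ⟨A, hA⟩ := exists_forall_le_of_abs_dEnergy_le hmu N u0 (w := w) hlam
  obtain ⟨δ, hδ, hδ1, L, hL⟩ := exists_forall_ge_of_abs_dEnergy_le hmu hnn hconn hN u0 hlam
  obtain ⟨n₀, hn₀⟩ := Filter.eventually_atTop.1 (hε0.eventually_le_const hδ)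
  have hmem : ∀ k, v (n₀ + k) ∈ Set.univ.pi fun x => Set.Icc L (A x) := fun k x _ =>
    have he := hn₀ _ (Nat.le_add_right _ _)
    ⟨hL _ _ he (hεbound _) x, hA _ _ (he.trans hδ1) (hεbound _) x⟩
  obtain ⟨v0, -, σ, hσ, hconv⟩ := (isCompact_univ_pi fun x => isCompact_Icc).tendsto_subseq hmem
  exact ⟨fun k => n₀ + σ k, v0, fun i j hij => Nat.add_lt_add_left (hσ hij) n₀,
    fun x => tendsto_pi_nhds.1 hconv x⟩

/-- Palais–Smale condition: if `I_λ(v_n) → α` and the smallest constants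
`ε_n` with `|I_λ'(v_n)[φ]| ≤ ε_n ‖φ‖_{W^{1,2}}` for all `φ` tend to `0`, then `(v_n)` has
a pointwise convergent subsequence. -/
theorem palais_smale {V : Type*} [Fintype V] [DecidableEq V] [Nonempty V]
    (w : V → V → ℝ) (μ : V → ℝ)
    (hsymm : ∀ x y, w x y = w y x) (hnn : ∀ x y, 0 ≤ w x y)
    (hconn : ∀ x y : V, Relation.ReflTransGen (fun a b => 0 < w a b) x y)
    (hmu : ∀ x, 0 < μ x)
    (N : ℕ) (hN : 1 ≤ N) (p : Fin N → V) (hp : Function.Injective p)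
    (u0 : V → ℝ)
    (hu0 : ∀ x, lapl μ w u0 x = -(4 * π * N / vol μ) + 4 * π * ∑ s, dirac μ (p s) x)
    (lam : ℝ) (hlam : 0 < lam)
    (v : ℕ → V → ℝ) (α : ℝ)
    (hI : Filter.Tendsto (fun n => energy μ w u0 N lam (v n)) Filter.atTop (nhds α))
    (ε : ℕ → ℝ)
    (hεbound : ∀ n, ∀ φ : V → ℝ,
      |dEnergy μ w u0 N lam (v n) φ| ≤ ε n * sobNorm μ w φ)
    (hεleast : ∀ n, ∀ c : ℝ,
      (∀ φ : V → ℝ, |dEnergy μ w u0 N lam (v n) φ| ≤ c * sobNorm μ w φ) → ε n ≤ c)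
    (hε0 : Filter.Tendsto ε Filter.atTop (nhds 0)) :
    ∃ (σ : ℕ → ℕ) (v0 : V → ℝ), StrictMono σ ∧
      ∀ x, Filter.Tendsto (fun n => v (σ n) x) Filter.atTop (nhds (v0 x)) :=
  palais_smale_general w μ hnn hconn hmu N hN u0 lam hlam v ε hεbound hε0
end
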